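/- arXiv:1010.2565 — 9 statements merged into one kernel-verified Lean document; each statement's English description precedes it below -/
import Mathlib

section
/- For an n-by-n Ferrers matrix A = (a_{ij}), the polynomial per(z_j + a_{ij}) in z_1,…,z_n is real stable if and only if the polynomial per(a_{ij} y_j + 1 − a_{ij}) in y_1,…,y_n is real stable. -/
open MvPolynomial

/-- The permanent of a square matrix over a commutative ring. -/
noncomputable def perm {n : ℕ} {R : Type*} [CommRing R]
    (H : Matrix (Fin n) (Fin n) R) : R :=
  ∑ σ : Equiv.Perm (Fin n), ∏ i : Fin n, H i (σ i)

/-- A polynomial `f ∈ ℂ[z_1,…,z_n]` is stable if either `f ≡ 0` or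
`f(w) ≠ 0` whenever all coordinates of `w` have positive imaginary part. -/
def IsStable {σ : Type*} (f : MvPolynomial σ ℂ) : Prop :=
  f = 0 ∨ ∀ w : σ → ℂ, (∀ j, 0 < (w j).im) → MvPolynomial.eval w f ≠ 0

/-- A real polynomial is real stable if it is stable as a complex polynomial. -/
def RealStable {σ : Type*} (f : MvPolynomial σ ℝ) : Prop :=
  IsStable (MvPolynomial.map (algebraMap ℝ ℂ) f)

/-- A Ferrers matrix: a `{0,1}`-matrix weakly decreasing down columns and
weakly increasing from left to right across rows. -/
def Ferrers {m n : ℕ} (A : Matrix (Fin m) (Fin n) ℝ) : Prop :=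
  (∀ i j, A i j = 0 ∨ A i j = 1) ∧
  (∀ i i' j, i ≤ i' → A i' j ≤ A i j) ∧
  (∀ i j j', j ≤ j' → A i j ≤ A i j')

/-!
Substituting `y_j = 1 + 1/z_j` factors every entry as `z_j + a = z_j (a y_j + 1 - a)`, so
`per(z_j + a_ij) = (∏ z_j) · per(a_ij y_j + 1 - a_ij)`. The Möbius map `z ↦ 1 + 1/z` is a
bijection from the upper onto the lower half-plane, and by complex conjugation a real polynomial
has no zeros with all coordinates in the lower half-plane iff it has none with all coordinates in
the upper one. As neither permanent vanishes identically, both stability conditions become the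
same zero-freeness statement.
-/

namespace Complex

theorem inv_im_pos_iff {z : ℂ} : 0 < z⁻¹.im ↔ z.im < 0 := by
  rcases eq_or_ne z 0 with rfl | hz
  · simp
  · rw [inv_im, div_pos_iff_of_pos_right (normSq_pos.2 hz), neg_pos]

theorem inv_im_neg_iff {z : ℂ} : z⁻¹.im < 0 ↔ 0 < z.im := by
  simpa using (inv_im_pos_iff (z := z⁻¹)).symm

theorem ne_zero_of_im_pos {z : ℂ} (hz : 0 < z.im) : z ≠ 0 := by
  rintro rfl
  simp at hz

end Complex

section Permanent

variable {n : ℕ} {R : Type*} [CommRing R]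

theorem map_perm {S : Type*} [CommRing S] (f : R →+* S) (H : Matrix (Fin n) (Fin n) R) :
    f (perm H) = perm fun i j => f (H i j) := by
  simp only [perm, map_sum, map_prod]

theorem perm_mul_column (H : Matrix (Fin n) (Fin n) R) (c : Fin n → R) :
    perm (fun i j => H i j * c j) = (∏ j, c j) * perm H := by
  simp only [perm, Finset.mul_sum]
  refine Finset.sum_congr rfl fun σ _ => ?_
  rw [Finset.prod_mul_distrib, mul_comm, Equiv.prod_comp σ c]

theorem perm_pos {H : Matrix (Fin n) (Fin n) ℝ} (hH : ∀ i j, 0 < H i j) : 0 < perm H :=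
  Finset.sum_pos (fun σ _ => Finset.prod_pos fun i _ => hH i (σ i)) Finset.univ_nonempty

end Permanent

section Stability

open ComplexConjugate

variable {σ : Type*}

theorem eval_map_algebraMap_conj (f : MvPolynomial σ ℝ) (y : σ → ℂ) :
    eval (fun j => conj (y j)) (map (algebraMap ℝ ℂ) f) =
      conj (eval y (map (algebraMap ℝ ℂ) f)) := by
  simp only [eval_map, eval₂_comp_left]
  congr 1
  ext; simp

theorem realStable_iff_of_ne_zero {f : MvPolynomial σ ℝ} (hf : f ≠ 0) :
    RealStable f ↔
      ∀ w : σ → ℂ, (∀ j, 0 < (w j).im) → eval w (map (algebraMap ℝ ℂ) f) ≠ 0 := by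
  rw [RealStable, IsStable, or_iff_right]
  rw [← map_zero (map (algebraMap ℝ ℂ))]
  exact (map_injective _ (algebraMap ℝ ℂ).injective).ne hf

theorem forall_im_neg_eval_ne_zero_iff (f : MvPolynomial σ ℝ) :
    (∀ y : σ → ℂ, (∀ j, (y j).im < 0) → eval y (map (algebraMap ℝ ℂ) f) ≠ 0) ↔
      ∀ y : σ → ℂ, (∀ j, 0 < (y j).im) → eval y (map (algebraMap ℝ ℂ) f) ≠ 0 := by
  constructor <;> intro h y hy <;>
  · have := h (fun j => conj (y j)) (by simpa using hy)
    rwa [eval_map_algebraMap_conj, map_ne_zero] at this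

end Stability

section PermanentPolynomials

variable {n : ℕ} (A : Matrix (Fin n) (Fin n) ℝ)

noncomputable def zPerm : MvPolynomial (Fin n) ℝ :=
  perm fun i j => X j + C (A i j)

noncomputable def yPerm : MvPolynomial (Fin n) ℝ :=
  perm fun i j => C (A i j) * X j + C (1 - A i j)

theorem eval_map_zPerm (w : Fin n → ℂ) :
    eval w (map (algebraMap ℝ ℂ) (zPerm A)) = perm fun i j => w j + A i j := by
  rw [eval_map, ← coe_eval₂Hom, zPerm]
  refine (map_perm _ _).trans ?_
  simp

theorem eval_map_yPerm (y : Fin n → ℂ) :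
    eval y (map (algebraMap ℝ ℂ) (yPerm A)) = perm fun i j => A i j * y j + (1 - A i j) := by
  rw [eval_map, ← coe_eval₂Hom, yPerm]
  refine (map_perm _ _).trans ?_
  simp

theorem eval_map_zPerm_eq_prod_mul (w : Fin n → ℂ) (hw : ∀ j, w j ≠ 0) :
    eval w (map (algebraMap ℝ ℂ) (zPerm A)) =
      (∏ j, w j) * eval (fun j => 1 + (w j)⁻¹) (map (algebraMap ℝ ℂ) (yPerm A)) := by
  rw [eval_map_zPerm, eval_map_yPerm]
  refine .trans ?_ (perm_mul_column _ w)
  congr 1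
  ext i j
  field_simp [hw j]
  ring

theorem zPerm_ne_zero : zPerm A ≠ 0 := by
  obtain ⟨M, hM⟩ := (Set.finite_range fun p : Fin n × Fin n => |A p.1 p.2|).bddAbove
  have hpos : 0 < eval (fun _ => M + 1) (zPerm A) := by
    rw [zPerm]
    refine (perm_pos fun i j => ?_).trans_eq (map_perm _ _).symm
    have := hM ⟨(i, j), rfl⟩
    simp only [eval_add, eval_X, eval_C]
    linarith [neg_abs_le (A i j)]
  intro h
  simp [h] at hpos

theorem yPerm_ne_zero : yPerm A ≠ 0 := by
  have hpos : 0 < eval (fun _ => 1) (yPerm A) := by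
    rw [yPerm]
    refine (perm_pos fun i j => ?_).trans_eq (map_perm _ _).symm
    simp
  intro h
  simp [h] at hpos

theorem forall_eval_map_zPerm_ne_zero_iff :
    (∀ w : Fin n → ℂ, (∀ j, 0 < (w j).im) → eval w (map (algebraMap ℝ ℂ) (zPerm A)) ≠ 0) ↔
      ∀ y : Fin n → ℂ, (∀ j, (y j).im < 0) → eval y (map (algebraMap ℝ ℂ) (yPerm A)) ≠ 0 := by
  constructor
  · intro h y hy
    have hw : ∀ j, 0 < ((y j - 1)⁻¹).im := fun j => Complex.inv_im_pos_iff.2 (by simpa using hy j)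
    have := h _ hw
    rw [eval_map_zPerm_eq_prod_mul A _ fun j => Complex.ne_zero_of_im_pos (hw j)] at this
    simpa using right_ne_zero_of_mul this
  · intro h w hw
    rw [eval_map_zPerm_eq_prod_mul A w fun j => Complex.ne_zero_of_im_pos (hw j)]
    refine mul_ne_zero (Finset.prod_ne_zero_iff.2 fun j _ => Complex.ne_zero_of_im_pos (hw j)) ?_
    exact h _ fun j => by simpa using Complex.inv_im_neg_iff.2 (hw j)

end PermanentPolynomials

theorem z_stable_iff_y_stable_general (n : ℕ) (A : Matrix (Fin n) (Fin n) ℝ) :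
    RealStable (perm (fun i j : Fin n =>
        (MvPolynomial.X j : MvPolynomial (Fin n) ℝ) + MvPolynomial.C (A i j))) ↔
    RealStable (perm (fun i j : Fin n =>
        MvPolynomial.C (A i j) * (MvPolynomial.X j : MvPolynomial (Fin n) ℝ) +
          MvPolynomial.C (1 - A i j))) := by
  change RealStable (zPerm A) ↔ RealStable (yPerm A)
  rw [realStable_iff_of_ne_zero (zPerm_ne_zero A), realStable_iff_of_ne_zero (yPerm_ne_zero A),
    forall_eval_map_zPerm_ne_zero_iff, forall_im_neg_eval_ne_zero_iff]

/-- For an `n × n` Ferrers matrix `A`, the polynomial `per(z_j + a_{ij})` is real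
stable if and only if `per(a_{ij} y_j + 1 - a_{ij})` is real stable. -/
theorem z_stable_iff_y_stable (n : ℕ) (A : Matrix (Fin n) (Fin n) ℝ) (hA : Ferrers A) :
    RealStable (perm (fun i j : Fin n =>
        (MvPolynomial.X j : MvPolynomial (Fin n) ℝ) + MvPolynomial.C (A i j))) ↔
    RealStable (perm (fun i j : Fin n =>
        MvPolynomial.C (A i j) * (MvPolynomial.X j : MvPolynomial (Fin n) ℝ) +
          MvPolynomial.C (1 - A i j))) :=
  z_stable_iff_y_stable_general n A
end

section
/- Let A = (a_{ij}) be an n-by-n Ferrers matrix with a_{nn} = 0, let k ≥ 1 be the number of 0's in the last column of A, and let A° be the (n−1)-by-(n−1) matrix obtained from A by deleting its last row and last column. Then per(B(A)) = k·x_n·per(B(A°)) + x_n·y_n·∂ per(B(A°)), where ∂ = Σ_{i=1}^{n−k} ∂/∂x_i + Σ_{j=1}^{n−1} ∂/∂y_j. -/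
open MvPolynomial

/-- The matrix `B(A;x;y)` with entries `b_{ij} = a_{ij} y_j + (1 - a_{ij}) x_i`,
where `Sum.inl i` is the row variable `x_i` and `Sum.inr j` is the column
variable `y_j`. -/
noncomputable def Bmat {m n : ℕ} (A : Matrix (Fin m) (Fin n) ℝ) :
    Matrix (Fin m) (Fin n) (MvPolynomial (Fin m ⊕ Fin n) ℝ) :=
  fun i j => MvPolynomial.C (A i j) * MvPolynomial.X (Sum.inr j) +
    MvPolynomial.C (1 - A i j) * MvPolynomial.X (Sum.inl i)


/-!
Since `a_{nn} = 0` and rows increase, the last row of `B(A)` is constantly `x_n`. Expanding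
along it writes `per B(A) / x_n` as a sum over `τ ∈ S_{n-1}` of `∏ᵢ b_{iτ(i)}` (the last row
in the last column, giving `per B(A°)`) and of the products in which the factor `b_{iτ(i)}` of
one row `i < n` is replaced by `b_{in}` (the last row in column `τ(i)`). By the Ferrers shape,
`b_{in} = [a_{in} = 0] b_{iτ(i)} + y_n ∂ b_{iτ(i)}`: if `a_{in} = 1` then `i ≤ n - k`,
`b_{in} = y_n` and `∂ b_{ij} = 1`; if `a_{in} = 0` then row `i` vanishes, so `b_{ij} = x_i`
for all `j` and `∂ x_i = 0`. Summing over `i`, the Leibniz rule turns the replaced products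
into `(k - 1) ∏ᵢ b_{iτ(i)} + y_n ∂ ∏ᵢ b_{iτ(i)}`, as `k - 1` rows `i < n` have `a_{in} = 0`.
-/

open Finset

namespace Derivation

variable {R A : Type*} [CommSemiring R] [CommSemiring A] [Algebra R A]

theorem leibniz_prod {ι : Type*} [DecidableEq ι] (D : Derivation R A A) (s : Finset ι)
    (f : ι → A) : D (∏ i ∈ s, f i) = ∑ i ∈ s, D (f i) * ∏ j ∈ s.erase i, f j := by
  induction s using Finset.induction_on with
  | empty => simp
  | @insert a s ha ih =>
    rw [prod_insert ha, leibniz, ih, sum_insert ha, erase_insert ha, smul_eq_mul, smul_eq_mul,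
      mul_sum, add_comm]
    congr 1
    · exact mul_comm _ _
    · refine Finset.sum_congr rfl fun i hi => ?_
      rw [erase_insert_of_ne (ne_of_mem_of_not_mem hi ha).symm,
        prod_insert fun h => ha (mem_of_mem_erase h)]
      ring

theorem sum_mul_prod_erase_of_eq_ite_add {ι : Type*} [DecidableEq ι] (D : Derivation R A A)
    (s : Finset ι) (f g : ι → A) (p : ι → Prop) [DecidablePred p] (y : A)
    (hg : ∀ i ∈ s, g i = (if p i then f i else 0) + y * D (f i)) :
    ∑ i ∈ s, g i * ∏ j ∈ s.erase i, f j =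
      #{i ∈ s | p i} • ∏ i ∈ s, f i + y * D (∏ i ∈ s, f i) := by
  have hite : ∀ i ∈ s, (if p i then f i else 0) * ∏ j ∈ s.erase i, f j =
      if p i then ∏ j ∈ s, f j else 0 := fun i hi => by
    split_ifs
    · exact mul_prod_erase s f hi
    · exact zero_mul _
  rw [leibniz_prod, mul_sum, ← sum_const, sum_filter, ← sum_add_distrib]
  refine Finset.sum_congr rfl fun i hi => ?_
  rw [hg i hi, add_mul, hite i hi, mul_assoc]

end Derivation

noncomputable def rowColDeriv {R α β : Type*} [CommSemiring R] (S : Finset α) (T : Finset β) :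
    Derivation R (MvPolynomial (α ⊕ β) R) (MvPolynomial (α ⊕ β) R) :=
  ∑ i ∈ S, pderiv (Sum.inl i) + ∑ j ∈ T, pderiv (Sum.inr j)

theorem rowColDeriv_apply {R α β : Type*} [CommSemiring R] (S : Finset α) (T : Finset β)
    (p : MvPolynomial (α ⊕ β) R) :
    rowColDeriv S T p = ∑ i ∈ S, pderiv (Sum.inl i) p + ∑ j ∈ T, pderiv (Sum.inr j) p := by
  simp [rowColDeriv, ← Derivation.coeFnAddMonoidHom_apply, map_sum]

theorem Fin.sub_card_filter_le_iff {n : ℕ} {p : Fin n → Prop} [DecidablePred p]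
    (hp : Monotone p) (i : Fin n) : n - #{j | p j} ≤ i ↔ p i := by
  constructor
  · intro hi
    by_contra hpi
    have hsub : ({j | p j} : Finset (Fin n)) ⊆ Ioi i := fun j hj => by
      simp only [mem_filter, mem_univ, true_and] at hj
      exact mem_Ioi.mpr (lt_of_not_ge fun hji => hpi (hp hji hj))
    have := card_le_card hsub
    rw [Fin.card_Ioi] at this
    omega
  · intro hpi
    have hsub : Ici i ⊆ ({j | p j} : Finset (Fin n)) := fun j hj => by
      simpa using hp (mem_Ici.mp hj) hpi
    have := card_le_card hsub
    rw [Fin.card_Ici] at this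
    omega

theorem rename_Bmat {m n m' n' : ℕ} (A : Matrix (Fin m) (Fin n) ℝ) (f : Fin m' → Fin m)
    (g : Fin n' → Fin n) (i : Fin m') (j : Fin n') :
    rename (Sum.map f g) (Bmat (fun i j => A (f i) (g j)) i j) = Bmat A (f i) (g j) := by
  simp [Bmat]

theorem rowColDeriv_Bmat {m n : ℕ} (A : Matrix (Fin m) (Fin n) ℝ) (S : Finset (Fin m))
    (T : Finset (Fin n)) (i : Fin m) (j : Fin n) :
    rowColDeriv S T (Bmat A i j) =
      (if i ∈ S then 1 - C (A i j) else 0) + (if j ∈ T then C (A i j) else 0) := by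
  simp [rowColDeriv_apply, Bmat, pderiv_X, Pi.single_apply]

theorem Bmat_eq_ite_add_mul_rowColDeriv {m n : ℕ} (A : Matrix (Fin m) (Fin n) ℝ)
    (S : Finset (Fin m)) (T : Finset (Fin n)) {i : Fin m} {c j : Fin n}
    (h01 : A i c = 0 ∨ A i c = 1) (hrow : A i c = 0 → A i j = 0) (hS : i ∈ S ↔ A i c = 1)
    (hT : j ∈ T) :
    Bmat A i c = (if A i c = 0 then Bmat A i j else 0) +
      X (Sum.inr c) * rowColDeriv S T (Bmat A i j) := by
  rw [rowColDeriv_Bmat, if_pos hT]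
  rcases h01 with h0 | h1
  · have hS' : i ∉ S := by rw [hS, h0]; norm_num
    simp [Bmat, h0, hrow h0, hS']
  · simp [Bmat, h1, hS.mpr h1]

/-- `Equiv.Perm.decomposeFin` conjugated by `Fin.rev`, so that it splits off the image of the
last element rather than of `0`. -/
noncomputable def permLastEquiv (m : ℕ) :
    Fin (m + 1) × Equiv.Perm (Fin m) ≃ Equiv.Perm (Fin (m + 1)) :=
  ((Equiv.prodCongr Fin.revPerm (Equiv.permCongr Fin.revPerm)).trans
    Equiv.Perm.decomposeFin.symm).trans (Equiv.permCongr Fin.revPerm)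

theorem permLastEquiv_apply_last (m : ℕ) (j : Fin (m + 1)) (τ : Equiv.Perm (Fin m)) :
    permLastEquiv m (j, τ) (Fin.last m) = j := by
  simp [permLastEquiv]

theorem permLastEquiv_apply_castSucc (m : ℕ) (j : Fin (m + 1)) (τ : Equiv.Perm (Fin m))
    (i : Fin m) :
    permLastEquiv m (j, τ) i.castSucc = Equiv.swap (Fin.last m) j (τ i).castSucc := by
  simp only [permLastEquiv, Equiv.trans_apply, Equiv.permCongr_apply, Equiv.prodCongr_apply,
    Fin.revPerm_symm, Fin.revPerm_apply, Prod.map, Fin.rev_castSucc,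
    Equiv.Perm.decomposeFin_symm_apply_succ]
  rw [Fin.rev_injective.map_swap, Fin.rev_succ, Fin.rev_rev, Fin.rev_rev, Fin.rev_zero,
    Fin.rev_rev]

section Expansion

variable {R : Type*} [CommRing R] {m : ℕ} (b : Matrix (Fin (m + 1)) (Fin (m + 1)) R)

theorem prod_swap_last_castSucc (τ : Equiv.Perm (Fin m)) (i' : Fin m) :
    ∏ i : Fin m, b i.castSucc (Equiv.swap (Fin.last m) (τ i').castSucc (τ i).castSucc) =
      b i'.castSucc (Fin.last m) * ∏ i ∈ univ.erase i', b i.castSucc (τ i).castSucc := by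
  rw [← mul_prod_erase univ _ (mem_univ i'), Equiv.swap_apply_right]
  congr 1
  refine prod_congr rfl fun i hi => ?_
  rw [Equiv.swap_apply_of_ne_of_ne (Fin.castSucc_ne_last _)]
  rw [Ne, Fin.castSucc_inj, τ.injective.eq_iff]
  exact ne_of_mem_erase hi

theorem perm_succ_eq_sum_last_row :
    perm b = ∑ τ : Equiv.Perm (Fin m),
      (b (Fin.last m) (Fin.last m) * ∏ i : Fin m, b i.castSucc (τ i).castSucc +
        ∑ i' : Fin m, b (Fin.last m) (τ i').castSucc *
          (b i'.castSucc (Fin.last m) * ∏ i ∈ univ.erase i', b i.castSucc (τ i).castSucc)) := by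
  rw [perm, ← (permLastEquiv m).sum_comp, Fintype.sum_prod_type, sum_comm]
  refine Finset.sum_congr rfl fun τ _ => ?_
  simp only [Fin.prod_univ_castSucc, permLastEquiv_apply_last, permLastEquiv_apply_castSucc,
    Fin.sum_univ_castSucc (n := m), Equiv.swap_self, Equiv.refl_apply, mul_comm _ (b _ _)]
  rw [add_comm, ← Equiv.sum_comp τ]
  simp only [prod_swap_last_castSucc]

end Expansion

namespace Ferrers

variable {m n : ℕ} {A : Matrix (Fin m) (Fin n) ℝ}

theorem eq_zero_of_col_le (hA : Ferrers A) {i : Fin m} {j j' : Fin n} (hj : j ≤ j')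
    (h : A i j' = 0) : A i j = 0 := by
  have := hA.2.2 i j j' hj
  rcases hA.1 i j with h0 | h1 <;> linarith

theorem eq_zero_of_row_le (hA : Ferrers A) {i i' : Fin m} {j : Fin n} (hi : i ≤ i')
    (h : A i j = 0) : A i' j = 0 := by
  have := hA.2.1 i i' j hi
  rcases hA.1 i' j with h0 | h1 <;> linarith

theorem lt_sub_card_iff (hA : Ferrers A) (c : Fin n) (i : Fin m) :
    (i : ℕ) < m - #{i | A i c = 0} ↔ A i c = 1 := by
  rw [← not_iff_not, not_lt, Fin.sub_card_filter_le_iff fun _ _ hi => hA.eq_zero_of_row_le hi]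
  rcases hA.1 i c with h | h <;> simp [h]

theorem sum_Bmat_mul_prod_erase {A : Matrix (Fin (m + 1)) (Fin (m + 1)) ℝ} (hA : Ferrers A)
    (S : Finset (Fin (m + 1))) (T : Finset (Fin (m + 1)))
    (hS : ∀ i, i ∈ S ↔ A i (Fin.last m) = 1) (hT : ∀ j : Fin m, j.castSucc ∈ T)
    (τ : Equiv.Perm (Fin m)) :
    ∑ i' : Fin m, Bmat A i'.castSucc (Fin.last m) *
        ∏ i ∈ univ.erase i', Bmat A i.castSucc (τ i).castSucc =
      #{i : Fin m | A i.castSucc (Fin.last m) = 0} • ∏ i, Bmat A i.castSucc (τ i).castSucc +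
        X (Sum.inr (Fin.last m)) * rowColDeriv S T (∏ i, Bmat A i.castSucc (τ i).castSucc) :=
  (rowColDeriv S T).sum_mul_prod_erase_of_eq_ite_add _ _ _ _ _ fun _ _ =>
    Bmat_eq_ite_add_mul_rowColDeriv A S T (hA.1 _ _)
      (hA.eq_zero_of_col_le (Fin.le_last _)) (hS _) (hT _)

end Ferrers

theorem diff_recurrence_general (m : ℕ) (A : Matrix (Fin (m + 1)) (Fin (m + 1)) ℝ)
    (hA : Ferrers A) (hlast : A (Fin.last m) (Fin.last m) = 0)
    (k : ℕ)
    (hk : k = (Finset.univ.filter (fun i : Fin (m + 1) => A i (Fin.last m) = 0)).card)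
    (P : MvPolynomial (Fin (m + 1) ⊕ Fin (m + 1)) ℝ)
    (hP : P = MvPolynomial.rename (Sum.map Fin.castSucc Fin.castSucc)
      (perm (Bmat (fun i j : Fin m => A i.castSucc j.castSucc)))) :
    perm (Bmat A) =
      (k : MvPolynomial (Fin (m + 1) ⊕ Fin (m + 1)) ℝ) *
          MvPolynomial.X (Sum.inl (Fin.last m)) * P +
        MvPolynomial.X (Sum.inl (Fin.last m)) * MvPolynomial.X (Sum.inr (Fin.last m)) *
          ((∑ i ∈ Finset.univ.filter (fun i : Fin (m + 1) => (i : ℕ) < m + 1 - k),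
              MvPolynomial.pderiv (Sum.inl i) P) +
            ∑ j : Fin m, MvPolynomial.pderiv (Sum.inr j.castSucc) P) := by
  set S := univ.filter (fun i : Fin (m + 1) => (i : ℕ) < m + 1 - k)
  have hS : ∀ i, i ∈ S ↔ A i (Fin.last m) = 1 := fun i => by
    simpa [S, hk] using hA.lt_sub_card_iff (Fin.last m) i
  have hT : ∀ j : Fin m, j.castSucc ∈ univ.map Fin.castSuccEmb := by simp
  have hD : (∑ i ∈ S, pderiv (Sum.inl i) P) + (∑ j : Fin m, pderiv (Sum.inr j.castSucc) P) =
      rowColDeriv S (univ.map Fin.castSuccEmb) P := by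
    rw [rowColDeriv_apply, sum_map]
    rfl
  have hk' : k = #{i : Fin m | A i.castSucc (Fin.last m) = 0} + 1 := by
    rw [hk, card_filter, Fin.sum_univ_castSucc, if_pos hlast, card_filter]
  have hP' : P = ∑ τ : Equiv.Perm (Fin m), ∏ i, Bmat A i.castSucc (τ i).castSucc := by
    simp only [hP, perm, map_sum, map_prod, rename_Bmat]
  have hlastRow : ∀ j, Bmat A (Fin.last m) j = X (Sum.inl (Fin.last m)) := fun j => by
    simp [Bmat, hA.eq_zero_of_col_le (Fin.le_last j) hlast]
  rw [perm_succ_eq_sum_last_row]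
  simp only [hlastRow, ← mul_add, ← mul_sum,
    hA.sum_Bmat_mul_prod_erase _ _ hS hT]
  rw [hD, hP', map_sum, hk']
  simp only [sum_add_distrib, ← mul_sum, ← smul_sum]
  push_cast
  ring

/-- Differential recurrence: if `A` is an `n × n` Ferrers matrix (`n = m+1`)
with `a_{nn} = 0`, `k` is the number of `0`'s in the last column of `A`, and
`A°` is obtained from `A` by deleting the last row and column, then
`per(B(A)) = k xₙ per(B(A°)) + xₙ yₙ ∂ per(B(A°))`, where
`∂ = Σ_{i=1}^{n-k} ∂/∂x_i + Σ_{j=1}^{n-1} ∂/∂y_j`. -/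
theorem diff_recurrence (m : ℕ) (A : Matrix (Fin (m + 1)) (Fin (m + 1)) ℝ)
    (hA : Ferrers A) (hlast : A (Fin.last m) (Fin.last m) = 0)
    (k : ℕ)
    (hk : k = (Finset.univ.filter (fun i : Fin (m + 1) => A i (Fin.last m) = 0)).card)
    (hk1 : 1 ≤ k)
    (P : MvPolynomial (Fin (m + 1) ⊕ Fin (m + 1)) ℝ)
    (hP : P = MvPolynomial.rename (Sum.map Fin.castSucc Fin.castSucc)
      (perm (Bmat (fun i j : Fin m => A i.castSucc j.castSucc)))) :
    perm (Bmat A) =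
      (k : MvPolynomial (Fin (m + 1) ⊕ Fin (m + 1)) ℝ) *
          MvPolynomial.X (Sum.inl (Fin.last m)) * P +
        MvPolynomial.X (Sum.inl (Fin.last m)) * MvPolynomial.X (Sum.inr (Fin.last m)) *
          ((∑ i ∈ Finset.univ.filter (fun i : Fin (m + 1) => (i : ℕ) < m + 1 - k),
              MvPolynomial.pderiv (Sum.inl i) P) +
            ∑ j : Fin m, MvPolynomial.pderiv (Sum.inr j.castSucc) P) :=
  diff_recurrence_general m A hA hlast k hk P hP
end

section
/- Let f(z_1,…,z_n,t) ∈ ℂ[z_1,…,z_n,t] be stable, and write f(z,t) = Σ_{k=0}^d f_k(z) t^k with f_d not identically zero (so d = deg_t(f)). Then f_k(z_1,…,z_n) is stable for every 0 ≤ k ≤ d. -/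
open MvPolynomial

/-!
Write `F(z, t) = Σ f_k(z) t^k` and let `H` be the upper half-plane. By Hurwitz's theorem, applied
on complex lines in `z`, the constant coefficient `f_0 = lim_{t → 0} F(·, t)` of a polynomial
with no zeros on `U × H`, `U` open, is either `0` or zero-free on `U`. The leading coefficient
`f_d` is the constant coefficient of `t^d F(·, 1/t)`, which has no zeros for `t` in the lower
half-plane, so it is zero-free on `U`. Hence `F(z, ·)` has degree `d` for `z ∈ U`, and by
Gauss–Lucas `∂_t^k F` has no zeros on `U × H` for `k ≤ d`; its constant coefficient is `k! f_k`.
-/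

open Filter Topology Metric Set
open scoped Polynomial

theorem Complex.le_norm_of_forall_mem_frontier_le_norm {E : Type*} [NormedAddCommGroup E]
    [NormedSpace ℂ E] [Nontrivial E] {f : E → ℂ} {U : Set E} (hU : Bornology.IsBounded U)
    (hf : DiffContOnCl ℂ f U) (hf₀ : ∀ z ∈ closure U, f z ≠ 0) {m : ℝ} (hm : 0 < m)
    (hfr : ∀ z ∈ frontier U, m ≤ ‖f z‖) {z : E} (hz : z ∈ closure U) : m ≤ ‖f z‖ := by
  have h := Complex.norm_le_of_forall_mem_frontier_norm_le hU (hf.inv hf₀)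
    (fun w hw => by simpa only [Pi.inv_apply, norm_inv] using inv_anti₀ hm (hfr w hw)) hz
  rwa [Pi.inv_apply, norm_inv, inv_le_inv₀ (norm_pos_iff.2 (hf₀ z hz)) hm] at h

theorem ne_zero_of_tendstoUniformlyOn_closedBall {ι : Type*} {l : Filter ι} {v : ι → ℂ → ℂ}
    {u : ℂ → ℂ} {c : ℂ} {r : ℝ} (hr : 0 < r) (hu : ContinuousOn u (sphere c r))
    (hu₀ : ∀ s ∈ sphere c r, u s ≠ 0) (hvu : TendstoUniformlyOn v u l (closedBall c r))
    (hv : ∃ᶠ i in l, DifferentiableOn ℂ (v i) (closedBall c r) ∧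
      ∀ s ∈ closedBall c r, v i s ≠ 0) :
    u c ≠ 0 := by
  obtain ⟨s₀, hs₀, hmin⟩ := (isCompact_sphere c r).exists_isMinOn
    (NormedSpace.sphere_nonempty.2 hr.le) hu.norm
  set μ := ‖u s₀‖
  have hμ : 0 < μ := norm_pos_iff.2 (hu₀ s₀ hs₀)
  obtain ⟨i, ⟨hvd, hv₀⟩, hclose⟩ :=
    (hv.and_eventually (tendstoUniformlyOn_iff.1 hvu (μ / 2) (half_pos hμ))).exists
  have hsphere : ∀ s ∈ sphere c r, μ / 2 ≤ ‖v i s‖ := fun s hs => by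
    have h₁ : μ ≤ ‖u s‖ := hmin hs
    have h₂ := hclose s (sphere_subset_closedBall hs)
    rw [dist_eq_norm] at h₂
    linarith [norm_sub_norm_le (u s) (v i s)]
  have hcenter : μ / 2 ≤ ‖v i c‖ := by
    refine Complex.le_norm_of_forall_mem_frontier_le_norm (isBounded_ball (x := c) (r := r))
      (hvd.diffContOnCl_ball subset_rfl) ?_ (half_pos hμ) ?_ ?_
    · rwa [closure_ball c hr.ne']
    · rwa [frontier_ball c hr.ne']
    · rw [closure_ball c hr.ne']
      exact mem_closedBall_self hr.le
  intro huc
  have h := hclose c (mem_closedBall_self hr.le)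
  rw [huc, dist_zero_left] at h
  linarith

theorem exists_closedBall_subset_and_ne_zero_on_sphere {u : ℂ → ℂ} {c : ℂ} {V : Set ℂ}
    (hV : V ∈ 𝓝 c) (hu : ∀ᶠ s in 𝓝[≠] c, u s ≠ 0) :
    ∃ r > 0, closedBall c r ⊆ V ∧ ∀ s ∈ sphere c r, u s ≠ 0 := by
  obtain ⟨ε, hε, hball⟩ := eventually_nhds_iff_ball.1
    ((eventually_nhdsWithin_iff.1 hu).and hV)
  refine ⟨ε / 2, half_pos hε, fun s hs => (hball s ?_).2, fun s hs => (hball s ?_).1 ?_⟩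
  · exact closedBall_subset_ball (half_lt_self hε) hs
  · exact sphere_subset_ball (half_lt_self hε) hs
  · exact ne_of_mem_sphere hs (half_pos hε).ne'

namespace Polynomial

theorem eval_derivative_ne_zero_of_convex {p : ℂ[X]} {C : Set ℂ} (hC : Convex ℝ C)
    (hp : 0 < p.degree) (h : ∀ t ∉ C, p.eval t ≠ 0) : ∀ t ∉ C, p.derivative.eval t ≠ 0 := by
  intro t ht ht₀
  have hroots : p.rootSet ℂ ⊆ C := fun w hw => by
    by_contra hwC
    exact h w hwC (by simpa using (mem_rootSet.1 hw).2)
  have hderiv : p.derivative ≠ 0 := by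
    simpa [derivative_eq_zero] using (natDegree_pos_iff_degree_pos.2 hp).ne'
  exact ht (convexHull_min hroots hC
    (rootSet_derivative_subset_convexHull_rootSet hp (by simpa [mem_rootSet, hderiv] using ht₀)))

theorem eval_iterate_derivative_ne_zero_of_convex {C : Set ℂ} (hC : Convex ℝ C) {k : ℕ} :
    ∀ {p : ℂ[X]}, k ≤ p.natDegree → (∀ t ∉ C, p.eval t ≠ 0) →
      ∀ t ∉ C, (derivative^[k] p).eval t ≠ 0 := by
  induction k with
  | zero => exact fun _ h => h
  | succ k ih =>
    intro p hk h
    have hp : 0 < p.natDegree := by omega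
    rw [Function.iterate_succ_apply]
    refine ih ?_ (eval_derivative_ne_zero_of_convex hC (natDegree_pos_iff_degree_pos.1 hp) h)
    rw [natDegree_derivative]
    omega

end Polynomial

section

variable {R σ : Type*} [CommSemiring R]

theorem MvPolynomial.eval_elim_optionEquivLeft_symm (P : (MvPolynomial σ R)[X]) (z : σ → R)
    (t : R) :
    eval (fun x => x.elim t z) ((optionEquivLeft R σ).symm P) = (P.map (eval z)).eval t := by
  rw [optionEquivLeft_elim_eval, AlgEquiv.apply_symm_apply]

theorem continuous_eval_map_eval [TopologicalSpace R] [IsTopologicalSemiring R]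
    (P : (MvPolynomial σ R)[X]) :
    Continuous fun p : R × (σ → R) => (P.map (eval p.2)).eval p.1 := by
  simp only [← MvPolynomial.eval_elim_optionEquivLeft_symm]
  refine (MvPolynomial.continuous_eval _).comp (continuous_pi fun x => ?_)
  cases x with
  | none => exact continuous_fst
  | some j => exact (continuous_apply j).comp continuous_snd

theorem analyticAt_eval_map_eval {𝕜 : Type*} [NontriviallyNormedField 𝕜]
    (P : (MvPolynomial σ 𝕜)[X]) {γ : 𝕜 → σ → 𝕜} {s : 𝕜} (hγ : ∀ j, AnalyticAt 𝕜 (γ · j) s)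
    (t : 𝕜) : AnalyticAt 𝕜 (fun s => (P.map (eval (γ s))).eval t) s := by
  simp_rw [← MvPolynomial.eval_elim_optionEquivLeft_symm, ← coe_aeval_eq_eval]
  refine AnalyticAt.aeval_mvPolynomial (fun x => ?_) _
  cases x with
  | none => exact analyticAt_const
  | some j => exact hγ j

end

theorem coeff_zero_eq_zero_or_forall_eval_ne_zero {σ : Type*} [Finite σ]
    {U : Set (σ → ℂ)} (hU : IsOpen U) (P : (MvPolynomial σ ℂ)[X])
    (hP : ∃ᶠ t in 𝓝 0, ∀ z ∈ U, (P.map (eval z)).eval t ≠ 0) :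
    P.coeff 0 = 0 ∨ ∀ z ∈ U, eval z (P.coeff 0) ≠ 0 := by
  refine or_iff_not_imp_left.2 fun hP₀ z₀ hz₀ hzero => ?_
  obtain ⟨z₁, hz₁⟩ : ∃ z₁, eval z₁ (P.coeff 0) ≠ 0 := by
    by_contra! h
    exact hP₀ (MvPolynomial.funext fun z => by simp [h z])
  let ℓ : ℂ → σ → ℂ := fun s => z₀ + s • (z₁ - z₀)
  have hℓ : ∀ j s, AnalyticAt ℂ (ℓ · j) s := fun j s => by
    simp only [ℓ, Pi.add_apply, Pi.smul_apply, smul_eq_mul]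
    fun_prop
  let v : ℂ → ℂ → ℂ := fun t s => (P.map (eval (ℓ s))).eval t
  have hv_cont : Continuous ↿v :=
    (continuous_eval_map_eval P).comp (continuous_fst.prodMk (by fun_prop))
  have hv_an : ∀ t, AnalyticOnNhd ℂ (v t) univ := fun t s _ =>
    analyticAt_eval_map_eval P (fun j => hℓ j s) t
  have hv₀ : ∀ s, v 0 s = eval (ℓ s) (P.coeff 0) := fun s => by
    simp [v, ← Polynomial.coeff_zero_eq_eval_zero]
  have hiso : ∀ᶠ s in 𝓝[≠] 0, v 0 s ≠ 0 :=
    ((hv_an 0) 0 (mem_univ 0)).eventually_eq_zero_or_eventually_ne_zero.resolve_left fun h => by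
      refine hz₁ ?_
      simpa [hv₀, ℓ] using (hv_an 0).eqOn_zero_of_preconnected_of_eventuallyEq_zero
        isPreconnected_univ (mem_univ 0) h (mem_univ 1)
  obtain ⟨r, hr, hball, hsphere⟩ := exists_closedBall_subset_and_ne_zero_on_sphere
    ((hU.preimage (by fun_prop : Continuous ℓ)).mem_nhds (by simpa [ℓ] using hz₀)) hiso
  have hlim : TendstoUniformlyOn v (v 0) (𝓝 0) (closedBall 0 r) :=
    ContinuousMap.tendsto_iff_forall_isCompact_tendstoUniformlyOn.1
      ((ContinuousMap.curry ⟨_, hv_cont⟩).continuous.tendsto 0) _ (isCompact_closedBall 0 r)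
  refine ne_zero_of_tendstoUniformlyOn_closedBall hr
    ((hv_an 0).continuousOn.mono (subset_univ _)) hsphere hlim
    (hP.mono fun t ht => ⟨(hv_an t).differentiableOn.mono (subset_univ _),
      fun s hs => ht _ (hball hs)⟩) ?_
  simpa [hv₀, ℓ] using hzero

theorem Complex.frequently_im_pos_nhds_zero : ∃ᶠ t in 𝓝 (0 : ℂ), 0 < t.im :=
  (mem_closure_iff_frequently (s := {t : ℂ | 0 < t.im})).1 (by simp)

theorem Complex.frequently_im_neg_nhds_zero : ∃ᶠ t in 𝓝 (0 : ℂ), t.im < 0 :=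
  (mem_closure_iff_frequently (s := {t : ℂ | t.im < 0})).1 (by simp)

section

variable {σ : Type*} [Finite σ] {U : Set (σ → ℂ)} {F : (MvPolynomial σ ℂ)[X]}

theorem leadingCoeff_eq_zero_or_forall_eval_ne_zero (hU : IsOpen U)
    (hF : ∀ z ∈ U, ∀ t : ℂ, 0 < t.im → (F.map (eval z)).eval t ≠ 0) :
    F.leadingCoeff = 0 ∨ ∀ z ∈ U, eval z F.leadingCoeff ≠ 0 := by
  have h := coeff_zero_eq_zero_or_forall_eval_ne_zero hU (F.reflect F.natDegree)
    (Complex.frequently_im_neg_nhds_zero.mono fun s hs z hz => ?_)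
  · simpa [Polynomial.coeff_reflect] using h
  have hs₀ : s ≠ 0 := by rintro rfl; simp at hs
  let := invertibleOfNonzero (inv_ne_zero hs₀)
  have hinv : 0 < (s⁻¹).im := by
    rw [Complex.inv_im]; exact div_pos (neg_pos.2 hs) (Complex.normSq_pos.2 hs₀)
  have hs : s = ⅟(s⁻¹) := by rw [invOf_eq_inv, inv_inv]
  have := hF z hz _ hinv
  rw [Polynomial.eval_map] at this ⊢
  rwa [hs, Ne, Polynomial.eval₂_reflect_eq_zero_iff _ _ _ _ le_rfl]

theorem eval_iterate_derivative_map_ne_zero (hU : IsOpen U)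
    (hF : ∀ z ∈ U, ∀ t : ℂ, 0 < t.im → (F.map (eval z)).eval t ≠ 0) {k : ℕ}
    (hk : k ≤ F.natDegree) :
    ∀ z ∈ U, ∀ t : ℂ, 0 < t.im → ((Polynomial.derivative^[k] F).map (eval z)).eval t ≠ 0 := by
  intro z hz t ht
  have hlead : eval z F.leadingCoeff ≠ 0 := by
    rcases leadingCoeff_eq_zero_or_forall_eval_ne_zero hU hF with h | h
    · refine absurd ?_ (hF z hz Complex.I (by simp))
      simp [Polynomial.leadingCoeff_eq_zero.1 h]
    · exact h z hz
  rw [← Polynomial.iterate_derivative_map]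
  refine Polynomial.eval_iterate_derivative_ne_zero_of_convex (convex_halfSpace_im_le 0) ?_
    (fun t ht => hF z hz t (not_le.1 ht)) t (not_le.2 ht)
  rwa [Polynomial.natDegree_map_of_leadingCoeff_ne_zero _ hlead]

theorem coeff_eq_zero_or_forall_eval_ne_zero (hU : IsOpen U)
    (hF : ∀ z ∈ U, ∀ t : ℂ, 0 < t.im → (F.map (eval z)).eval t ≠ 0) (k : ℕ) :
    F.coeff k = 0 ∨ ∀ z ∈ U, eval z (F.coeff k) ≠ 0 := by
  rcases lt_or_ge F.natDegree k with hk | hk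
  · exact Or.inl (Polynomial.coeff_eq_zero_of_natDegree_lt hk)
  have h := coeff_zero_eq_zero_or_forall_eval_ne_zero hU (Polynomial.derivative^[k] F)
    (Complex.frequently_im_pos_nhds_zero.mono fun t ht z hz =>
      eval_iterate_derivative_map_ne_zero hU hF hk z hz t ht)
  simpa [Polynomial.coeff_iterate_derivative, Nat.factorial_ne_zero] using h

end

theorem coeffs_stable_general (n : ℕ) (f : MvPolynomial (Option (Fin n)) ℂ)
    (hf : IsStable f)
    (d : ℕ) :
    ∀ k ≤ d, IsStable ((MvPolynomial.optionEquivLeft ℂ (Fin n) f).coeff k) := by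
  intro k _
  rcases hf with rfl | hf
  · simp [IsStable]
  refine coeff_eq_zero_or_forall_eval_ne_zero (U := {w | ∀ j, 0 < (w j).im}) ?_
    (fun z hz t ht => ?_) k
  · simpa [Set.pi] using isOpen_set_pi (finite_univ (α := Fin n)) fun _ _ =>
      isOpen_lt continuous_const Complex.continuous_im
  · rw [← optionEquivLeft_elim_eval]
    exact hf _ (Option.rec ht hz)

/-- If `f(z,t) = Σ_{k=0}^d f_k(z) t^k` is a stable polynomial in the variables
`z_1,…,z_n,t` (the extra variable `t` being indexed by `Option.none`), with
`f_d ≢ 0` (so `d = deg_t f`), then each coefficient `f_k(z)` is stable for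
`0 ≤ k ≤ d`. -/
theorem coeffs_stable (n : ℕ) (f : MvPolynomial (Option (Fin n)) ℂ)
    (hf : IsStable f)
    (d : ℕ) (hd : d = (MvPolynomial.optionEquivLeft ℂ (Fin n) f).natDegree)
    (hfd : (MvPolynomial.optionEquivLeft ℂ (Fin n) f).coeff d ≠ 0) :
    ∀ k ≤ d, IsStable ((MvPolynomial.optionEquivLeft ℂ (Fin n) f).coeff k) :=
  coeffs_stable_general n f hf d
end

section
/- Let V be a real vector space, φ : V^n → ℝ a multilinear form, and e_1,…,e_n, v_2,…,v_n fixed vectors in V. Suppose the polynomial φ(e_1, v_2 + z_2 e_2, …, v_n + z_n e_n) in ℝ[z_2,…,z_n] is not identically zero. Then the set of all v_1 ∈ V for which the polynomial φ(v_1 + z_1 e_1, v_2 + z_2 e_2, …, v_n + z_n e_n) in ℝ[z_1,…,z_n] is real stable is either empty or a convex cone with apex 0 that contains both e_1 and −e_1. -/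
open MvPolynomial

/-- The polynomial `φ(u_1 + z_1 e_1, …, u_n + z_n e_n)` obtained by multilinear
expansion:  `Σ_{S ⊆ [n]} φ(S.piecewise e u) Π_{j ∈ S} z_j`. -/
noncomputable def affinePoly {n : ℕ} {V : Type*} [AddCommGroup V] [Module ℝ V]
    (φ : MultilinearMap ℝ (fun _ : Fin n => V) ℝ) (e u : Fin n → V) :
    MvPolynomial (Fin n) ℝ :=
  ∑ S : Finset (Fin n),
    MvPolynomial.C (φ (S.piecewise e u)) * ∏ j ∈ S, MvPolynomial.X j

/-!
Write the polynomial as `z₁ q + l_{v₁}`, where `q = φ(e₁, v₂ + z₂e₂, …)` and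
`l_{v₁} = φ(v₁, v₂ + z₂e₂, …)` do not involve `z₁` and `l` is linear in `v₁`. If some `l_u`
makes it stable, then `q` has no zero in the upper half-space: at a zero `w₀` of `q`, the open
mapping theorem for `q / l_u` gives nearby points at which the root `z₁ = -l_u / q` lies in the
upper half-plane. Once `q` is zero-free, solving for `z₁` shows that stability for `v₁` means
`0 ≤ Im (l_{v₁} · conj q)` on the upper half-space: a family of linear conditions on `v₁`,
satisfied by `±e₁` since `l_{e₁} = q`.
-/

open ComplexConjugate Topology

lemma Complex.im_div_eq_im_mul_conj_div (a b : ℂ) : (a / b).im = (a * conj b).im / normSq b := by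
  simp only [div_im, mul_im, conj_re, conj_im]
  ring

lemma Complex.im_mul_conj_eq_neg (a b : ℂ) : (a * conj b).im = -(b * conj a).im := by
  simp only [mul_im, conj_re, conj_im]
  ring

lemma forall_im_pos_mul_add_ne_zero_iff {q l : ℂ} (hq : q ≠ 0) :
    (∀ z : ℂ, 0 < z.im → z * q + l ≠ 0) ↔ 0 ≤ (l * conj q).im := by
  have hroot : ∀ z, z * q + l = 0 ↔ z = -l / q := fun z => by
    rw [eq_div_iff hq, eq_neg_iff_add_eq_zero]
  have him : 0 < (-l / q).im ↔ (l * conj q).im < 0 := by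
    rw [Complex.im_div_eq_im_mul_conj_div, div_pos_iff_of_pos_right (Complex.normSq_pos.2 hq),
      neg_mul, Complex.neg_im, neg_pos]
  simp only [ne_eq, hroot]
  constructor
  · intro h
    by_contra! hneg
    exact h _ (him.2 hneg) rfl
  · rintro h z hz rfl
    exact (him.1 hz).not_ge h

lemma isOpen_upperHalfSpace {σ : Type*} [Finite σ] : IsOpen {w : σ → ℂ | ∀ j, 0 < (w j).im} := by
  simp only [Set.ofPred_forall]
  exact isOpen_iInter_of_finite fun j =>
    isOpen_lt continuous_const (Complex.continuous_im.comp (continuous_apply j))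

section UpperHalfSpace

variable {σ : Type*} [DecidableEq σ] {i : σ} {q l : (σ → ℂ) → ℂ}

lemma update_mem_upperHalfSpace {w : σ → ℂ} (hw : ∀ j, 0 < (w j).im) {z : ℂ} (hz : 0 < z.im) :
    ∀ j, 0 < (Function.update w i z j).im := by
  intro j
  rcases eq_or_ne j i with rfl | hj
  · simpa using hz
  · simpa [hj] using hw j

lemma im_mul_conj_nonneg_of_forall_mul_add_ne_zero (hqi : ∀ w z, q (Function.update w i z) = q w)
    (hli : ∀ w z, l (Function.update w i z) = l w)
    (h : ∀ w : σ → ℂ, (∀ j, 0 < (w j).im) → w i * q w + l w ≠ 0)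
    {w : σ → ℂ} (hw : ∀ j, 0 < (w j).im) (hqw : q w ≠ 0) : 0 ≤ (l w * conj (q w)).im := by
  refine (forall_im_pos_mul_add_ne_zero_iff hqw).1 fun z hz => ?_
  simpa [hqi, hli] using h _ (update_mem_upperHalfSpace (i := i) hw hz)

lemma forall_mul_add_ne_zero_iff (hqi : ∀ w z, q (Function.update w i z) = q w)
    (hli : ∀ w z, l (Function.update w i z) = l w)
    (hq : ∀ w : σ → ℂ, (∀ j, 0 < (w j).im) → q w ≠ 0) :
    (∀ w : σ → ℂ, (∀ j, 0 < (w j).im) → w i * q w + l w ≠ 0) ↔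
      ∀ w : σ → ℂ, (∀ j, 0 < (w j).im) → 0 ≤ (l w * conj (q w)).im :=
  ⟨fun h w hw => im_mul_conj_nonneg_of_forall_mul_add_ne_zero hqi hli h hw (hq w hw),
    fun h w hw => (forall_im_pos_mul_add_ne_zero_iff (hq w hw)).2 (h w hw) _ (hw i)⟩

lemma ne_zero_of_forall_mul_add_ne_zero [Fintype σ] (hqa : AnalyticOnNhd ℂ q Set.univ)
    (hla : AnalyticOnNhd ℂ l Set.univ) (hqi : ∀ w z, q (Function.update w i z) = q w)
    (hli : ∀ w z, l (Function.update w i z) = l w) (hq0 : ∃ w, q w ≠ 0)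
    (h : ∀ w : σ → ℂ, (∀ j, 0 < (w j).im) → w i * q w + l w ≠ 0)
    {w₀ : σ → ℂ} (hw₀ : ∀ j, 0 < (w₀ j).im) : q w₀ ≠ 0 := by
  intro hqw₀
  have hlw₀ : l w₀ ≠ 0 := fun hlw₀ => h w₀ hw₀ (by simp [hqw₀, hlw₀])
  set g := fun w => q w / l w
  have hg₀ : g w₀ = 0 := by simp [g, hqw₀]
  have hnear : ∀ᶠ w in 𝓝 w₀, (∀ j, 0 < (w j).im) ∧ l w ≠ 0 :=
    (isOpen_upperHalfSpace.eventually_mem hw₀).and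
      ((hla w₀ trivial).continuousAt.eventually_ne hlw₀)
  have hopen : 𝓝 (g w₀) ≤ Filter.map g (𝓝 w₀) := by
    refine ((hqa w₀ trivial).div (hla w₀ trivial) hlw₀).eventually_constant_or_nhds_le_map_nhds
      |>.resolve_left fun hconst => ?_
    obtain ⟨w₁, hw₁⟩ := hq0
    have hqnear : ∀ᶠ w in 𝓝 w₀, q w = 0 := (hconst.and hnear).mono fun w ⟨hgw, _, hlw⟩ => by
      simpa [g, hg₀, hlw] using hgw
    exact hw₁ (hqa.eqOn_zero_of_preconnected_of_eventuallyEq_zero isPreconnected_univ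
      (Set.mem_univ w₀) hqnear (Set.mem_univ w₁))
  have hfreq : ∃ᶠ w in 𝓝 w₀, 0 < (g w).im := by
    have : ∃ᶠ z in 𝓝 (g w₀), 0 < z.im :=
      (mem_closure_iff_frequently (s := {z : ℂ | 0 < z.im})).1 (by simp [hg₀])
    exact this.filter_mono hopen
  obtain ⟨w, hgw, hw, hlw⟩ := (hfreq.and_eventually hnear).exists
  have hqw : q w ≠ 0 := fun hqw => by simp [g, hqw] at hgw
  have := im_mul_conj_nonneg_of_forall_mul_add_ne_zero hqi hli h hw hqw
  rw [Complex.im_div_eq_im_mul_conj_div, div_pos_iff_of_pos_right (Complex.normSq_pos.2 hlw),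
    Complex.im_mul_conj_eq_neg] at hgw
  linarith

end UpperHalfSpace

section Polynomial

variable {σ : Type*}

lemma exists_aeval_ne_zero {p : MvPolynomial σ ℝ} (hp : p ≠ 0) :
    ∃ w : σ → ℂ, aeval w p ≠ 0 := by
  by_contra! h
  exact hp (map_injective _ (algebraMap ℝ ℂ).injective
    (MvPolynomial.funext fun w => by simpa [aeval_def] using h w))

lemma analyticOnNhd_aeval [Fintype σ] (p : MvPolynomial σ ℝ) :
    AnalyticOnNhd ℂ (fun w : σ → ℂ => aeval w p) Set.univ :=
  AnalyticOnNhd.aeval_mvPolynomial (f := fun w => w)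
    (fun j => (ContinuousLinearMap.proj (R := ℂ) (φ := fun _ : σ => ℂ) j).analyticOnNhd _) p

variable [DecidableEq σ] {i : σ}

lemma eval₂_update_of_notMem_vars {R S : Type*} [CommSemiring R] [CommSemiring S] (f : R →+* S)
    {p : MvPolynomial σ R} (hp : i ∉ p.vars) (w : σ → S) (z : S) :
    eval₂ f (Function.update w i z) p = eval₂ f w p :=
  eval₂_congr f _ _ fun {j c} hj hc => Function.update_of_ne (by
    rintro rfl
    exact hp ((mem_vars_iff_mem_support j).2 ⟨c, mem_support_iff.2 hc, hj⟩)) _ _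

lemma X_mul_add_ne_zero {R : Type*} [CommRing R] [IsDomain R] [Infinite R]
    {Q L : MvPolynomial σ R} (hQ : i ∉ Q.vars) (hL : i ∉ L.vars) (hQ0 : Q ≠ 0) :
    X i * Q + L ≠ 0 := by
  intro h
  refine hQ0 (MvPolynomial.funext fun w => ?_)
  have hQw : eval (Function.update w i (w i + 1)) Q = eval w Q :=
    eval₂_update_of_notMem_vars _ hQ _ _
  have hLw : eval (Function.update w i (w i + 1)) L = eval w L :=
    eval₂_update_of_notMem_vars _ hL _ _
  have h₁ := congrArg (eval w) h
  have h₂ := congrArg (eval (Function.update w i (w i + 1))) h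
  simp only [map_add, map_mul, eval_X, map_zero, hQw, hLw, Function.update_self] at h₁ h₂
  rw [map_zero]
  linear_combination h₂ - h₁

lemma realStable_X_mul_add_iff {Q L : MvPolynomial σ ℝ} (hQ : i ∉ Q.vars) (hL : i ∉ L.vars)
    (hQ0 : Q ≠ 0) :
    RealStable (X i * Q + L) ↔
      ∀ w : σ → ℂ, (∀ j, 0 < (w j).im) → w i * aeval w Q + aeval w L ≠ 0 := by
  have hne : map (algebraMap ℝ ℂ) (X i * Q + L) ≠ 0 :=
    (map_ne_zero_iff _ (map_injective _ (algebraMap ℝ ℂ).injective)).2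
      (X_mul_add_ne_zero hQ hL hQ0)
  rw [RealStable, IsStable, or_iff_right hne]
  simp [aeval_def]

end Polynomial

section Multilinear

variable {n : ℕ} {V : Type*} [AddCommGroup V] [Module ℝ V]
  (φ : MultilinearMap ℝ (fun _ : Fin n => V) ℝ) (e v : Fin n → V) (i : Fin n)

/-- `φ(v_1 + z_1 e_1, …, x, …, v_n + z_n e_n)`, with `x` in slot `i`. -/
@[simps]
noncomputable def fixedAffinePoly : V →ₗ[ℝ] MvPolynomial (Fin n) ℝ where
  toFun x := ∑ S ∈ Finset.univ.filter (fun S : Finset (Fin n) => i ∉ S),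
    C (φ (S.piecewise e (Function.update v i x))) * ∏ j ∈ S, X j
  map_add' x y := by
    rw [← Finset.sum_add_distrib]
    refine Finset.sum_congr rfl fun S hS => ?_
    simp only [← Finset.update_piecewise_of_notMem _ _ _ (Finset.mem_filter.1 hS).2,
      φ.map_update_add, C_add, add_mul]
  map_smul' c x := by
    rw [Finset.smul_sum]
    refine Finset.sum_congr rfl fun S hS => ?_
    simp only [← Finset.update_piecewise_of_notMem _ _ _ (Finset.mem_filter.1 hS).2,
      φ.map_update_smul, smul_eq_mul, C_mul, smul_eq_C_mul, mul_assoc, RingHom.id_apply]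

lemma affinePoly_update_eq (x : V) :
    affinePoly φ e (Function.update v i x) =
      X i * fixedAffinePoly φ e v i (e i) + fixedAffinePoly φ e v i x := by
  rw [affinePoly, fixedAffinePoly_apply, fixedAffinePoly_apply,
    ← Finset.sum_filter_add_sum_filter_not Finset.univ (i ∈ ·), Finset.mul_sum]
  congr 1
  symm
  refine Finset.sum_nbij' (insert i) (Finset.erase · i) ?_ ?_ ?_ ?_ ?_
  · simp
  · simp
  · intro S hS
    exact Finset.erase_insert (Finset.mem_filter.1 hS).2
  · intro S hS
    exact Finset.insert_erase (Finset.mem_filter.1 hS).2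
  · intro S hS
    have hiS := (Finset.mem_filter.1 hS).2
    rw [Finset.prod_insert hiS, Finset.piecewise_insert,
      Finset.update_piecewise_of_notMem _ _ _ hiS, Function.update_idem]
    ring

lemma notMem_vars_fixedAffinePoly (x : V) : i ∉ (fixedAffinePoly φ e v i x).vars := by
  intro hi
  obtain ⟨S, hS, hiS⟩ := Finset.mem_biUnion.1 (vars_sum_subset _ _ hi)
  have hiS' : i ∈ (∏ j ∈ S, X j : MvPolynomial (Fin n) ℝ).vars := by
    simpa [vars_C] using vars_mul _ _ hiS
  obtain ⟨j, hj, hij⟩ := Finset.mem_biUnion.1 (vars_prod _ hiS')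
  rw [vars_X, Finset.mem_singleton] at hij
  exact (Finset.mem_filter.1 hS).2 (hij ▸ hj)

end Multilinear

/-- Let `φ : V^n → ℝ` be a multilinear form and `e_1,…,e_n, v_2,…,v_n` fixed
vectors.  If `φ(e_1, v_2 + z_2 e_2, …, v_n + z_n e_n)` is not identically zero,
then the set of `v_1 ∈ V` for which `φ(v_1 + z_1 e_1, …, v_n + z_n e_n)` is
real stable is empty or a convex cone (with apex `0`) containing `e_1` and
`-e_1`.  (Here the first coordinate is indexed by `0 : Fin (n+1)`.) -/
theorem stable_cone (n : ℕ) (V : Type*) [AddCommGroup V] [Module ℝ V]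
    (φ : MultilinearMap ℝ (fun _ : Fin (n + 1) => V) ℝ) (e v : Fin (n + 1) → V)
    (h0 : (∑ S ∈ Finset.univ.filter (fun S : Finset (Fin (n + 1)) => (0 : Fin (n + 1)) ∉ S),
        MvPolynomial.C (φ (S.piecewise e (Function.update v 0 (e 0)))) *
          ∏ j ∈ S, MvPolynomial.X j) ≠ (0 : MvPolynomial (Fin (n + 1)) ℝ)) :
    letI Cs : Set V :=
      {v₁ | RealStable (affinePoly φ e (Function.update v 0 v₁))}
    Cs = ∅ ∨
      (e 0 ∈ Cs ∧ -e 0 ∈ Cs ∧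
        (∀ u ∈ Cs, ∀ w ∈ Cs, u + w ∈ Cs) ∧
        (∀ c : ℝ, 0 < c → ∀ u ∈ Cs, c • u ∈ Cs)) := by
  set Cs : Set V := {v₁ | RealStable (affinePoly φ e (Function.update v 0 v₁))}
  set F := fixedAffinePoly φ e v 0
  set q : (Fin (n + 1) → ℂ) → ℂ := fun w => aeval w (F (e 0))
  have hF0 : F (e 0) ≠ 0 := h0
  have hF : ∀ x (w : Fin (n + 1) → ℂ) z, aeval (Function.update w 0 z) (F x) = aeval w (F x) :=
    fun x => eval₂_update_of_notMem_vars _ (notMem_vars_fixedAffinePoly φ e v 0 x)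
  have hmem : ∀ x, x ∈ Cs ↔
      ∀ w : Fin (n + 1) → ℂ, (∀ j, 0 < (w j).im) → w 0 * q w + aeval w (F x) ≠ 0 := fun x => by
    show RealStable _ ↔ _
    rw [affinePoly_update_eq, realStable_X_mul_add_iff (notMem_vars_fixedAffinePoly φ e v 0 _)
      (notMem_vars_fixedAffinePoly φ e v 0 x) hF0]
  rcases Cs.eq_empty_or_nonempty with hC | ⟨u, hu⟩
  · exact .inl hC
  have hq : ∀ w : Fin (n + 1) → ℂ, (∀ j, 0 < (w j).im) → q w ≠ 0 := fun w =>
    ne_zero_of_forall_mul_add_ne_zero (analyticOnNhd_aeval _) (analyticOnNhd_aeval _) (hF _) (hF u)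
      (exists_aeval_ne_zero hF0) ((hmem u).1 hu)
  have hcone : ∀ x, x ∈ Cs ↔
      ∀ w : Fin (n + 1) → ℂ, (∀ j, 0 < (w j).im) → 0 ≤ (aeval w (F x) * conj (q w)).im :=
    fun x => (hmem x).trans (forall_mul_add_ne_zero_iff (hF _) (hF x) hq)
  simp only [hcone]
  refine .inr ⟨fun w _ => ?_, fun w _ => ?_, fun x hx y hy w hw => ?_, fun c hc x hx w hw => ?_⟩
  · change 0 ≤ (q w * conj (q w)).im
    rw [Complex.mul_conj, Complex.ofReal_im]
  · rw [map_neg, map_neg, neg_mul, Complex.neg_im, Complex.mul_conj, Complex.ofReal_im, neg_zero]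
  · rw [map_add, map_add, add_mul, Complex.add_im]
    exact add_nonneg (hx w hw) (hy w hw)
  · rw [map_smul, map_smul, smul_mul_assoc, Complex.smul_im, smul_eq_mul]
    exact mul_nonneg hc.le (hx w hw)
end

section
/- Let T : ℝ[z_1,…,z_n] → ℝ[z_1,…,z_n] be a linear transformation that preserves real stability (i.e., T(f) is real stable whenever f is real stable). For f ∈ ℂ[z_1,…,z_n] written uniquely as f = g + i·h with g, h ∈ ℝ[z_1,…,z_n], define T_ℂ(f) = T(g) + i·T(h) and T̂_ℂ(f) = T(g) − i·T(h). Then for every stable f ∈ ℂ[z_1,…,z_n], either T_ℂ(f) is stable or T̂_ℂ(f) is stable. -/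
/-!
Write `f̄ = g - i h` for the polynomial with conjugated coefficients, so that
`f̄(w) = conj (f (conj w))`. Restricting a stable `f` to the real lines `s ↦ Re w + s Im w` and
factoring the restriction over its roots (all in the closed lower half-plane) gives `|f̄| ≤ |f|`
on the product of upper half-planes. With `c = α + β i` we have `2 (α g + β h) = conj c f + c f̄`,
so a zero of `α g + β h` there forces `|f̄| = |f|` at an interior point; by the maximum modulus
principle `f̄ / f` is then constant and `α g + β h` vanishes identically. Hence all real
combinations of `g` and `h`, and so all real combinations of `G = T g` and `H = T h`, are real
stable. A zero of `Im (G conj H)` gives a real relation between `G` and `H` at that point, hence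
everywhere, so on the connected region `Im (G conj H)` has a constant sign; a zero of `G ± i H`
would make it `∓ |H|²` there, which decides which of the two is stable.
-/

open MvPolynomial

open ComplexConjugate

def upperHalfPlanePi (σ : Type*) : Set (σ → ℂ) := {w | ∀ j, 0 < (w j).im}

section UpperHalfPlanePi

variable {σ : Type*}

theorem isOpen_upperHalfPlanePi [Finite σ] : IsOpen (upperHalfPlanePi σ) := by
  simpa [upperHalfPlanePi, Set.pi] using
    isOpen_set_pi Set.finite_univ fun (_ : σ) _ => isOpen_lt continuous_const Complex.continuous_im

theorem convex_upperHalfPlanePi : Convex ℝ (upperHalfPlanePi σ) := by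
  simpa [upperHalfPlanePi, Set.pi] using
    convex_pi (s := Set.univ) fun (_ : σ) _ => convex_halfSpace_im_gt (0 : ℝ)

end UpperHalfPlanePi

theorem Complex.im_mul_conj_eq_zero_iff {x y : ℂ} :
    (x * conj y).im = 0 ↔ ∃ α β : ℝ, (α ≠ 0 ∨ β ≠ 0) ∧ α * x + β * y = 0 := by
  constructor
  · intro h
    rcases eq_or_ne y 0 with rfl | hy
    · exact ⟨0, 1, by simp⟩
    refine ⟨normSq y, -(x * conj y).re, .inl (normSq_pos.2 hy).ne', ?_⟩
    have hreal : ((x * conj y).re : ℂ) = x * conj y := Complex.ext (by simp) (by simp [h])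
    push_cast
    rw [hreal, normSq_eq_conj_mul_self]
    ring
  · rintro ⟨α, β, hαβ, hxy⟩
    have hre : α * x.re + β * y.re = 0 := by simpa using congrArg re hxy
    have him : α * x.im + β * y.im = 0 := by simpa using congrArg im hxy
    have hα : α * (x * conj y).im = 0 := by
      simp only [mul_im, conj_re, conj_im]; linear_combination y.re * him - y.im * hre
    have hβ : β * (x * conj y).im = 0 := by
      simp only [mul_im, conj_re, conj_im]; linear_combination x.im * hre - x.re * him
    rcases hαβ with h | h
    · exact (mul_eq_zero.1 hα).resolve_left h
    · exact (mul_eq_zero.1 hβ).resolve_left h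

theorem Complex.norm_conj_sub_le_norm_sub {z a : ℂ} (hz : 0 ≤ z.im) (ha : a.im ≤ 0) :
    ‖conj z - a‖ ≤ ‖z - a‖ := by
  rw [← sq_le_sq₀ (norm_nonneg _) (norm_nonneg _), Complex.sq_norm, Complex.sq_norm,
    normSq_apply, normSq_apply]
  simp only [sub_re, sub_im, conj_re, conj_im]
  nlinarith

theorem Polynomial.norm_eval_conj_le {P : Polynomial ℂ} (hP : ∀ z : ℂ, 0 < z.im → P.eval z ≠ 0)
    {z : ℂ} (hz : 0 ≤ z.im) : ‖P.eval (conj z)‖ ≤ ‖P.eval z‖ := by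
  have hsplit : P.Splits := IsAlgClosed.splits P
  have hnorm (m : Multiset ℂ) : ‖m.prod‖ = (m.map (‖·‖)).prod := map_multiset_prod normHom m
  simp only [hsplit.eval_eq_prod_roots, norm_mul, hnorm, Multiset.map_map]
  refine mul_le_mul_of_nonneg_left (Multiset.prod_map_le_prod_map₀ _ _ (fun _ _ => norm_nonneg _)
    fun a ha => Complex.norm_conj_sub_le_norm_sub hz ?_) (norm_nonneg _)
  exact not_lt.1 fun h => hP a h (Polynomial.isRoot_of_mem_roots ha)

theorem IsPreconnected.forall_nonneg_or_forall_nonpos {X : Type*} [TopologicalSpace X]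
    {U : Set X} (hU : IsPreconnected U) {B : X → ℝ} (hB : ContinuousOn B U)
    (hzero : ∀ z ∈ U, B z = 0 → ∀ w ∈ U, B w = 0) :
    (∀ w ∈ U, 0 ≤ B w) ∨ ∀ w ∈ U, B w ≤ 0 := by
  by_contra! ⟨⟨w₁, hw₁, hB₁⟩, ⟨w₂, hw₂, hB₂⟩⟩
  obtain ⟨z, hz, hBz⟩ := hU.intermediate_value hw₁ hw₂ hB ⟨hB₁.le, hB₂.le⟩
  exact hB₁.ne (hzero z hz hBz w₁ hw₁)

namespace MvPolynomial

variable {σ : Type*}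

theorem eval_aeval_line (f : MvPolynomial σ ℂ) (a b : σ → ℂ) (s : ℂ) :
    ((aeval fun j => Polynomial.C (a j) + Polynomial.C (b j) * Polynomial.X) f).eval s =
      eval (fun j => a j + b j * s) f := by
  rw [aeval_def, polynomial_eval_eval₂, eval, coe_eval₂Hom]
  congr 1
  · ext; simp
  · simp

theorem eval_map_conj (f : MvPolynomial σ ℂ) (w : σ → ℂ) :
    eval w (map (starRingEnd ℂ) f) = conj (eval (fun j => conj (w j)) f) := by
  rw [eval_map, eval, coe_eval₂Hom, eval₂_comp_left]
  simp [Function.comp_def]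

theorem eval_map_algebraMap_smul_add_smul (g h : MvPolynomial σ ℝ) (α β : ℝ) (w : σ → ℂ) :
    eval w (map (algebraMap ℝ ℂ) (α • g + β • h)) =
      α * eval w (map (algebraMap ℝ ℂ) g) + β * eval w (map (algebraMap ℝ ℂ) h) := by
  simp [smul_eq_C_mul]

theorem map_conj_map_algebraMap (p : MvPolynomial σ ℝ) :
    map (starRingEnd ℂ) (map (algebraMap ℝ ℂ) p) = map (algebraMap ℝ ℂ) p := by
  rw [map_map, show (starRingEnd ℂ).comp (algebraMap ℝ ℂ) = algebraMap ℝ ℂ from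
    RingHom.ext Complex.conj_ofReal]

theorem norm_eval_map_conj_le {f : MvPolynomial σ ℂ}
    (hf : ∀ w ∈ upperHalfPlanePi σ, eval w f ≠ 0) {w : σ → ℂ} (hw : w ∈ upperHalfPlanePi σ) :
    ‖eval w (map (starRingEnd ℂ) f)‖ ≤ ‖eval w f‖ := by
  set P : Polynomial ℂ :=
    aeval (fun j => Polynomial.C ((w j).re : ℂ) + Polynomial.C ((w j).im : ℂ) * Polynomial.X) f
  have hP : ∀ s : ℂ, 0 < s.im → P.eval s ≠ 0 := fun s hs => by
    rw [eval_aeval_line]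
    exact hf _ fun j => by simpa using mul_pos (hw j) hs
  have hPI : P.eval Complex.I = eval w f := by
    rw [eval_aeval_line]; simp [Complex.re_add_im]
  have hPconjI : P.eval (conj Complex.I) = eval (fun j => conj (w j)) f := by
    have hline : (fun j => ((w j).re : ℂ) + (w j).im * conj Complex.I) = fun j => conj (w j) := by
      funext j; apply Complex.ext <;> simp
    rw [eval_aeval_line, hline]
  rw [eval_map_conj, Complex.norm_conj, ← hPI, ← hPconjI]
  exact Polynomial.norm_eval_conj_le hP (by simp)

theorem eq_zero_of_eval_eq_zero_on_open [Fintype σ] {𝕜 : Type*} [RCLike 𝕜]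
    {p : MvPolynomial σ 𝕜} {U : Set (σ → 𝕜)} (hU : IsOpen U) {z₀ : σ → 𝕜} (hz₀ : z₀ ∈ U)
    (h : ∀ z ∈ U, eval z p = 0) : p = 0 :=
  funext fun x => (AnalyticOnNhd.eval_mvPolynomial p).eqOn_zero_of_preconnected_of_eventuallyEq_zero
    isPreconnected_univ (Set.mem_univ z₀) (Filter.eventually_of_mem (hU.mem_nhds hz₀) h)
    (Set.mem_univ x)

theorem exists_eval_map_conj_eq_mul [Fintype σ] {f : MvPolynomial σ ℂ}
    (hf : ∀ w ∈ upperHalfPlanePi σ, eval w f ≠ 0) {w₀ : σ → ℂ} (hw₀ : w₀ ∈ upperHalfPlanePi σ)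
    (h : ‖eval w₀ (map (starRingEnd ℂ) f)‖ = ‖eval w₀ f‖) :
    ∃ u : ℂ, ∀ w ∈ upperHalfPlanePi σ, eval w (map (starRingEnd ℂ) f) = u * eval w f := by
  set ψ : (σ → ℂ) → ℂ := fun w => eval w (map (starRingEnd ℂ) f) / eval w f
  have hdiff (p : MvPolynomial σ ℂ) : DifferentiableOn ℂ (eval · p) (upperHalfPlanePi σ) :=
    (AnalyticOnNhd.eval_mvPolynomial (𝕜 := ℂ) p).differentiableOn.mono (Set.subset_univ _)
  have hψ : DifferentiableOn ℂ ψ (upperHalfPlanePi σ) := by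
    simpa only [ψ, div_eq_mul_inv] using (hdiff _).fun_mul ((hdiff f).fun_inv hf)
  have hmax : IsMaxOn (norm ∘ ψ) (upperHalfPlanePi σ) w₀ := fun w hw => by
    simp only [Set.mem_ofPred_eq, Function.comp_apply, ψ, norm_div, h,
      div_self (norm_ne_zero_iff.2 (hf w₀ hw₀))]
    exact div_le_one_of_le₀ (norm_eval_map_conj_le hf hw) (norm_nonneg _)
  have hconst := Complex.eqOn_of_isPreconnected_of_isMaxOn_norm
    convex_upperHalfPlanePi.isPreconnected isOpen_upperHalfPlanePi hψ hw₀ hmax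
  refine ⟨ψ w₀, fun w hw => ?_⟩
  have hψw : ψ w = ψ w₀ := hconst hw
  rw [← hψw]
  exact (div_mul_cancel₀ _ (hf w hw)).symm

theorem realStable_smul_add_smul [Fintype σ] {g h : MvPolynomial σ ℝ}
    (hf : IsStable (map (algebraMap ℝ ℂ) g + C Complex.I * map (algebraMap ℝ ℂ) h)) (α β : ℝ) :
    RealStable (α • g + β • h) := by
  set f := map (algebraMap ℝ ℂ) g + C Complex.I * map (algebraMap ℝ ℂ) h
  set c : ℂ := α + β * Complex.I
  have hq (w : σ → ℂ) : 2 * eval w (map (algebraMap ℝ ℂ) (α • g + β • h)) =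
      conj c * eval w f + c * eval w (map (starRingEnd ℂ) f) := by
    rw [eval_map_algebraMap_smul_add_smul]
    simp only [f, c, map_add, map_mul, map_C, map_conj_map_algebraMap, eval_C, Complex.conj_I,
      Complex.conj_ofReal]
    ring_nf
    rw [Complex.I_sq]
    ring
  rw [RealStable, IsStable, or_iff_not_imp_right]
  intro hq0
  push Not at hq0
  obtain ⟨w₀, hw₀, hqw₀⟩ := hq0
  refine eq_zero_of_eval_eq_zero_on_open isOpen_upperHalfPlanePi hw₀ fun w hw => ?_
  rcases hf with hf0 | hf
  · simpa [hf0] using hq w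
  rcases eq_or_ne c 0 with hc | hc
  · simpa [hc] using hq w
  have hcomb : conj c * eval w₀ f + c * eval w₀ (map (starRingEnd ℂ) f) = 0 := by
    rw [← hq, hqw₀, mul_zero]
  have hnorm : ‖eval w₀ (map (starRingEnd ℂ) f)‖ = ‖eval w₀ f‖ := by
    have := congrArg norm (eq_neg_of_add_eq_zero_right hcomb)
    rwa [norm_mul, norm_neg, norm_mul, Complex.norm_conj,
      mul_right_inj' (norm_ne_zero_iff.2 hc)] at this
  obtain ⟨u, hu⟩ := exists_eval_map_conj_eq_mul hf hw₀ hnorm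
  have hu₀ : conj c + c * u = 0 := by
    rw [hu w₀ hw₀, ← mul_assoc, ← add_mul] at hcomb
    exact (mul_eq_zero.1 hcomb).resolve_right (hf w₀ hw₀)
  have := hq w
  rw [hu w hw, ← mul_assoc, ← add_mul, hu₀, zero_mul] at this
  simpa using this

theorem im_eval_mul_conj_eq_zero_of_eq_zero {G H : MvPolynomial σ ℝ}
    (hall : ∀ α β : ℝ, RealStable (α • G + β • H)) {z : σ → ℂ} (hz : z ∈ upperHalfPlanePi σ)
    (hBz : (eval z (map (algebraMap ℝ ℂ) G) * conj (eval z (map (algebraMap ℝ ℂ) H))).im = 0)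
    (w : σ → ℂ) :
    (eval w (map (algebraMap ℝ ℂ) G) * conj (eval w (map (algebraMap ℝ ℂ) H))).im = 0 := by
  obtain ⟨α, β, hαβ, hzαβ⟩ := Complex.im_mul_conj_eq_zero_iff.1 hBz
  have hcomb : map (algebraMap ℝ ℂ) (α • G + β • H) = 0 :=
    (hall α β).resolve_right fun hnv => hnv z hz (by rwa [eval_map_algebraMap_smul_add_smul])
  refine Complex.im_mul_conj_eq_zero_iff.2 ⟨α, β, hαβ, ?_⟩
  rw [← eval_map_algebraMap_smul_add_smul, hcomb, map_zero]

theorem isStable_add_I_mul_of_forall_nonneg {G H : MvPolynomial σ ℝ} (hG : RealStable G)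
    (hH : RealStable H) (hB : ∀ w ∈ upperHalfPlanePi σ,
      0 ≤ (eval w (map (algebraMap ℝ ℂ) G) * conj (eval w (map (algebraMap ℝ ℂ) H))).im) :
    IsStable (map (algebraMap ℝ ℂ) G + C Complex.I * map (algebraMap ℝ ℂ) H) := by
  rw [IsStable, or_iff_not_imp_right]
  intro hzero
  push Not at hzero
  obtain ⟨z, hz, hz0⟩ := hzero
  set x := eval z (map (algebraMap ℝ ℂ) G)
  set y := eval z (map (algebraMap ℝ ℂ) H)
  have hxy : x = -(Complex.I * y) := by
    simpa [x, y, eq_neg_iff_add_eq_zero] using hz0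
  have hBz : (x * conj y).im = -Complex.normSq y := by
    rw [hxy, neg_mul, mul_assoc, Complex.mul_conj]
    simp
  have hy : y = 0 := Complex.normSq_eq_zero.1 (by linarith [hB z hz, Complex.normSq_nonneg y])
  have hx : x = 0 := by rw [hxy, hy, mul_zero, neg_zero]
  rw [hG.resolve_right fun hnv => hnv z hz hx, hH.resolve_right fun hnv => hnv z hz hy,
    mul_zero, add_zero]

theorem isStable_add_or_isStable_sub [Fintype σ] {G H : MvPolynomial σ ℝ}
    (hall : ∀ α β : ℝ, RealStable (α • G + β • H)) :
    IsStable (map (algebraMap ℝ ℂ) G + C Complex.I * map (algebraMap ℝ ℂ) H) ∨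
      IsStable (map (algebraMap ℝ ℂ) G - C Complex.I * map (algebraMap ℝ ℂ) H) := by
  have hG : RealStable G := by simpa using hall 1 0
  have hH : RealStable H := by simpa using hall 0 1
  have hnegH : RealStable (-H) := by simpa using hall 0 (-1)
  have hcont : ContinuousOn (fun w => (eval w (map (algebraMap ℝ ℂ) G) *
      conj (eval w (map (algebraMap ℝ ℂ) H))).im) (upperHalfPlanePi σ) :=
    (Complex.continuous_im.comp ((continuous_eval _).mul
      (Complex.continuous_conj.comp (continuous_eval _)))).continuousOn
  rcases convex_upperHalfPlanePi.isPreconnected.forall_nonneg_or_forall_nonpos hcont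
    fun z hz hBz w _ => im_eval_mul_conj_eq_zero_of_eq_zero hall hz hBz w with hB | hB
  · exact .inl (isStable_add_I_mul_of_forall_nonneg hG hH hB)
  · refine .inr ?_
    simpa [sub_eq_add_neg] using isStable_add_I_mul_of_forall_nonneg hG hnegH fun w hw => by
      simpa using hB w hw

end MvPolynomial

/-- If `T : ℝ[z] → ℝ[z]` is a linear transformation preserving real stability,
and a stable `f ∈ ℂ[z]` is written (uniquely) as `f = g + i h` with
`g, h ∈ ℝ[z]`, then either `T_ℂ(f) = T(g) + i T(h)` is stable, or
`T̂_ℂ(f) = T(g) - i T(h)` is stable. -/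
theorem complexified_preserver (n : ℕ)
    (T : MvPolynomial (Fin n) ℝ →ₗ[ℝ] MvPolynomial (Fin n) ℝ)
    (hT : ∀ p : MvPolynomial (Fin n) ℝ, RealStable p → RealStable (T p))
    (f : MvPolynomial (Fin n) ℂ) (g h : MvPolynomial (Fin n) ℝ)
    (hgh : f = MvPolynomial.map (algebraMap ℝ ℂ) g +
      MvPolynomial.C Complex.I * MvPolynomial.map (algebraMap ℝ ℂ) h)
    (hf : IsStable f) :
    IsStable (MvPolynomial.map (algebraMap ℝ ℂ) (T g) +
        MvPolynomial.C Complex.I * MvPolynomial.map (algebraMap ℝ ℂ) (T h)) ∨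
      IsStable (MvPolynomial.map (algebraMap ℝ ℂ) (T g) -
        MvPolynomial.C Complex.I * MvPolynomial.map (algebraMap ℝ ℂ) (T h)) := by
  subst hgh
  refine isStable_add_or_isStable_sub fun α β => ?_
  simpa using hT _ (realStable_smul_add_smul hf α β)
end

section
/- The multivariate Eulerian polynomial Σ_{σ ∈ S_n} ∏_{i : σ(i) > i} y_{σ(i)} (the sum over all permutations σ of {1,…,n} of the product of y_{σ(i)} over the excedances of σ) is a real stable polynomial in y_1,…,y_n, and it equals Σ_{σ ∈ S_n} ∏_{i : σ(i) > σ(i+1)} y_{σ(i)} (product over descent positions 1 ≤ i ≤ n−1 of the descent tops). -/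
/-!
Write `W_P(x, y) = ∑_σ ∏_i (x_{σ i} if P σ i, else y)` for a statistic `P` on `S_n`.
Removing the letter `n+1` from `σ ∈ S_{n+1}` (for excedances: `σ = (n+1 p) σ'`; for descents:
deleting it from the word of `σ`) gives, at `y = 1`, the same recursion
`W(x) = W(x') + x_{n+1} ∑_v W(x' with x_v := 1)` for both statistics, hence the identity.

For stability keep `y`: then `W_exc(x, y) = y (H + x_{n+1} H')` with `H = W_exc(x', y)` and
`H'` the derivative at `t = 0` of `t ↦ W_exc(x' + t, y + t)`. By induction this polynomial in `t`
has no roots in the open upper half-plane, so `Im (H' / H) ≤ 0` by the partial-fraction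
expansion of a logarithmic derivative, and `H + x_{n+1} H' = 0` would force `Im x_{n+1} ≤ 0`.
-/

open MvPolynomial

/-- The multivariate Eulerian polynomial `Σ_{σ ∈ S_n} Π_{i : σ(i) > i} y_{σ(i)}`
(product over the excedances of `σ`). -/
noncomputable def mvEulerianExc (n : ℕ) : MvPolynomial (Fin n) ℝ :=
  ∑ σ : Equiv.Perm (Fin n),
    ∏ i ∈ Finset.univ.filter (fun i : Fin n => i < σ i), MvPolynomial.X (σ i)

/-- The same polynomial written via descents:
`Σ_{σ ∈ S_n} Π_{i : σ(i) > σ(i+1)} y_{σ(i)}` (product over descent tops). -/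
noncomputable def mvEulerianDes (n : ℕ) : MvPolynomial (Fin n) ℝ :=
  ∑ σ : Equiv.Perm (Fin n),
    ∏ i : Fin n,
      if h : (i : ℕ) + 1 < n then
        (if σ ⟨(i : ℕ) + 1, h⟩ < σ i then MvPolynomial.X (σ i) else 1)
      else 1

open Finset Equiv Fin

section Descent
variable {β : Type*} [LinearOrder β] {n : ℕ}

def IsDescent (f : Fin n → β) (i : Fin n) : Prop :=
  ∃ h : (i : ℕ) + 1 < n, f ⟨i + 1, h⟩ < f i

instance (f : Fin n → β) (i : Fin n) : Decidable (IsDescent f i) := by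
  unfold IsDescent; infer_instance

theorem isDescent_iff {f : Fin n → β} {i j : Fin n} (hij : (j : ℕ) = i + 1) :
    IsDescent f i ↔ f j < f i := by
  rw [show j = ⟨i + 1, by omega⟩ from Fin.ext hij]
  exact ⟨fun ⟨_, h⟩ => h, fun h => ⟨_, h⟩⟩

theorem not_isDescent_of_val_add_one_eq {f : Fin n → β} {i : Fin n} (hi : (i : ℕ) + 1 = n) :
    ¬ IsDescent f i :=
  fun ⟨h, _⟩ => by omega

theorem isDescent_comp_strictMono {γ : Type*} [LinearOrder γ] {g : β → γ} (hg : StrictMono g)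
    (f : Fin n → β) (i : Fin n) : IsDescent (g ∘ f) i ↔ IsDescent f i :=
  exists_congr fun _ => hg.lt_iff_lt

variable {f : Fin n → β} {a : β}

theorem isDescent_insertNth_self (hf : ∀ j, f j < a) (k : Fin (n + 1)) :
    IsDescent (insertNth k a f) k ↔ k ≠ last n := by
  refine ⟨fun ⟨h, _⟩ hk => by simp [hk] at h, fun hk => ?_⟩
  have hkn : (k : ℕ) < n := val_lt_last hk
  rw [isDescent_iff (j := k.succAbove ⟨k, hkn⟩) ?_, insertNth_apply_same,
    insertNth_apply_succAbove]
  · exact hf _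
  · rw [succAbove_of_le_castSucc k _ le_rfl]; rfl

theorem isDescent_insertNth_succAbove (hf : ∀ j, f j < a) (k : Fin (n + 1)) (j : Fin n) :
    IsDescent (insertNth k a f) (k.succAbove j) ↔ j.succ ≠ k ∧ IsDescent f j := by
  rw [Ne, Fin.ext_iff, val_succ]
  rcases lt_or_ge (castSucc j) k with hjk | hkj
  · have hpos : (k.succAbove j : ℕ) = j := by rw [succAbove_of_castSucc_lt _ _ hjk]; rfl
    rcases (show (j : ℕ) + 1 ≤ k from hjk).eq_or_lt with hsk | hsk
    · rw [isDescent_iff (j := k) (by omega), insertNth_apply_same, insertNth_apply_succAbove]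
      simp [hsk, (hf j).asymm]
    · let j' : Fin n := ⟨j + 1, by omega⟩
      rw [isDescent_iff (j := k.succAbove j') ?_, insertNth_apply_succAbove,
        insertNth_apply_succAbove, isDescent_iff (j := j') rfl]
      · simp [hsk.ne]
      · rw [succAbove_of_castSucc_lt _ _ (show castSucc j' < k from hsk), hpos]; rfl
  · have hpos : (k.succAbove j : ℕ) = j + 1 := by rw [succAbove_of_le_castSucc _ _ hkj]; rfl
    have hkj' : (k : ℕ) ≤ j := hkj
    rw [and_iff_right (by omega)]
    by_cases hj1 : (j : ℕ) + 1 < n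
    · let j' : Fin n := ⟨j + 1, hj1⟩
      rw [isDescent_iff (j := k.succAbove j') ?_, insertNth_apply_succAbove,
        insertNth_apply_succAbove, isDescent_iff (j := j') rfl]
      have hkj'' : k ≤ castSucc j' := show (k : ℕ) ≤ j + 1 by omega
      rw [succAbove_of_le_castSucc _ _ hkj'', hpos]; rfl
    · exact iff_of_false (fun ⟨h, _⟩ => by omega) fun ⟨h, _⟩ => hj1 h

end Descent

namespace Equiv.Perm
variable {n : ℕ}

def extendLast (σ : Perm (Fin n)) : Perm (Fin (n + 1)) :=
  finSuccEquivLast.symm.permCongr σ.optionCongr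

@[simp] theorem extendLast_castSucc (σ : Perm (Fin n)) (i : Fin n) :
    extendLast σ (castSucc i) = castSucc (σ i) := by
  simp [extendLast]

@[simp] theorem extendLast_last (σ : Perm (Fin n)) : extendLast σ (last n) = last n := by
  simp [extendLast]

theorem extendLast_injective : Function.Injective (extendLast (n := n)) := fun σ τ h =>
  Equiv.ext fun i => castSucc_injective _ <| by
    rw [← extendLast_castSucc, h, extendLast_castSucc]

theorem sum_fin_succ {M : Type*} [AddCommMonoid M] (f : Perm (Fin (n + 1)) → M) :
    ∑ π, f π = ∑ σ, f (extendLast σ)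
      + ∑ c : Fin n, ∑ σ, f (swap (last n) (castSucc c) * extendLast σ) := by
  rw [← (decomposeOption.symm.trans finSuccEquivLast.symm.permCongr).sum_comp f,
    Fintype.sum_prod_type, Fintype.sum_option]
  have hswap (c : Fin n) :
      finSuccEquivLast.symm.permCongr (swap none (some c)) = swap (last n) (castSucc c) :=
    (symm_trans_swap_trans _ _ _).trans (by simp)
  simp only [trans_apply, decomposeOption_symm_apply, swap_self, ← one_def, one_mul,
    permCongr_mul, hswap, extendLast]

def insertLast (σ : Perm (Fin n)) (k : Fin (n + 1)) : Perm (Fin (n + 1)) :=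
  extendLast σ * (cycleIcc k (last n))⁻¹

theorem insertLast_apply_self (σ : Perm (Fin n)) (k : Fin (n + 1)) :
    insertLast σ k k = last n := by
  rw [insertLast, mul_apply, inv_eq_iff_eq.mpr (cycleIcc_of_last (le_last k)).symm,
    extendLast_last]

theorem insertLast_apply_succAbove (σ : Perm (Fin n)) (k : Fin (n + 1)) (j : Fin n) :
    insertLast σ k (k.succAbove j) = castSucc (σ j) := by
  have h : cycleIcc k (last n) (castSucc j) = k.succAbove j := by
    rw [← succAbove_last_apply]
    exact congrFun (cycleIcc_comp_succAbove k (last n) (le_last k)) j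
  rw [insertLast, mul_apply, inv_eq_iff_eq.mpr h.symm, extendLast_castSucc]

theorem coe_insertLast (σ : Perm (Fin n)) (k : Fin (n + 1)) :
    ⇑(insertLast σ k) = insertNth k (last n) (castSucc ∘ σ) :=
  eq_insertNth_iff.mpr ⟨insertLast_apply_self σ k, funext (insertLast_apply_succAbove σ k)⟩

theorem insertLast_bijective :
    Function.Bijective fun p : Perm (Fin n) × Fin (n + 1) => insertLast p.1 p.2 := by
  refine (Fintype.bijective_iff_injective_and_card _).mpr ⟨?_, ?_⟩
  · rintro ⟨σ, k⟩ ⟨τ, l⟩ h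
    have hkl : k = l := (insertLast σ k).injective <| by
      rw [insertLast_apply_self, show insertLast σ k = insertLast τ l from h,
        insertLast_apply_self]
    subst hkl
    simp only [Prod.mk.injEq, and_true]
    exact extendLast_injective (mul_right_cancel (h : insertLast σ k = insertLast τ k))
  · simp [Fintype.card_perm, Nat.factorial_succ, mul_comm]

theorem sum_fin_succ_insertLast {M : Type*} [AddCommMonoid M]
    (f : Perm (Fin (n + 1)) → M) : ∑ π, f π = ∑ σ, ∑ k, f (insertLast σ k) := by
  rw [← Fintype.sum_prod_type', Fintype.sum_bijective _ insertLast_bijective _ f fun _ => rfl]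

end Equiv.Perm

section WeightSum
variable {α R : Type*} [Fintype α] [DecidableEq α] [CommSemiring R]
  (P : Perm α → α → Prop) [∀ σ i, Decidable (P σ i)]

def weightSum (x : α → R) (y : R) : R :=
  ∑ σ : Perm α, ∏ i, if P σ i then x (σ i) else y

def puncturedWeightSum (x : α → R) (y : R) : R :=
  ∑ σ : Perm α, ∑ j, ∏ i ∈ univ.erase j, if P σ i then x (σ i) else y

theorem map_weightSum {S : Type*} [CommSemiring S] (f : R →+* S) (x : α → R) (y : R) :
    f (weightSum P x y) = weightSum P (f ∘ x) (f y) := by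
  simp [weightSum, apply_ite f]

theorem mul_puncturedWeightSum (x : α → R) (y : R) :
    y * puncturedWeightSum P x y = ∑ v, weightSum P (Function.update x v y) y := by
  simp only [puncturedWeightSum, weightSum, mul_sum]
  conv_rhs => rw [sum_comm]
  refine sum_congr rfl fun σ _ => ?_
  conv_rhs => rw [← Equiv.sum_comp σ]
  refine sum_congr rfl fun j _ => ?_
  have hupd : (fun i => if P σ i then Function.update x (σ j) y (σ i) else y)
      = Function.update (fun i => if P σ i then x (σ i) else y) j y := by
    ext i
    rcases eq_or_ne i j with rfl | hij
    · simp
    · simp [hij, σ.injective.ne hij]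
  rw [hupd, prod_update_of_mem (mem_univ j), sdiff_singleton_eq_erase]

theorem puncturedWeightSum_one (x : α → R) :
    puncturedWeightSum P x 1 = ∑ v, weightSum P (Function.update x v 1) 1 := by
  rw [← mul_puncturedWeightSum, one_mul]

end WeightSum

section Excedance
variable {R : Type*} [CommSemiring R] {n : ℕ} (x : Fin (n + 1) → R) (y : R)

theorem prod_excedance_extendLast (σ : Perm (Fin n)) :
    ∏ i, (if i < σ.extendLast i then x (σ.extendLast i) else y)
      = y * ∏ i, if i < σ i then x (castSucc (σ i)) else y := by
  simp [prod_univ_castSucc, mul_comm]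

theorem prod_excedance_swap_mul_extendLast (σ : Perm (Fin n)) (c : Fin n) :
    ∏ i, (if i < (swap (last n) (castSucc c) * σ.extendLast) i
        then x ((swap (last n) (castSucc c) * σ.extendLast) i) else y)
      = y * (x (last n) * ∏ i ∈ univ.erase (σ.symm c),
          if i < σ i then x (castSucc (σ i)) else y) := by
  set π := swap (last n) (castSucc c) * σ.extendLast
  have hcast (i : Fin n) :
      (if castSucc i < π (castSucc i) then x (π (castSucc i)) else y)
        = Function.update (fun i => if i < σ i then x (castSucc (σ i)) else y)
            (σ.symm c) (x (last n)) i := by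
    rcases eq_or_ne (σ i) c with hi | hi
    · obtain rfl : i = σ.symm c := by rw [← hi, symm_apply_apply]
      simp [π, swap_apply_right, castSucc_lt_last]
    · have : i ≠ σ.symm c := by rintro rfl; simp at hi
      rw [Function.update_of_ne this, Perm.mul_apply, Perm.extendLast_castSucc,
        swap_apply_of_ne_of_ne (castSucc_lt_last (σ i)).ne (castSucc_injective _ |>.ne hi)]
      simp only [castSucc_lt_castSucc_iff]
  rw [prod_univ_castSucc, prod_congr rfl fun i _ => hcast i, prod_update_of_mem (mem_univ _),
    sdiff_singleton_eq_erase]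
  simp [π, swap_apply_left, (castSucc_lt_last c).not_gt, mul_comm]

theorem weightSum_excedance_succ :
    weightSum (fun σ i => i < σ i) x y
      = y * (weightSum (fun σ i => i < σ i) (x ∘ castSucc) y
        + x (last n) * puncturedWeightSum (fun σ i => i < σ i) (x ∘ castSucc) y) := by
  rw [weightSum, Perm.sum_fin_succ]
  simp only [prod_excedance_extendLast, prod_excedance_swap_mul_extendLast]
  rw [sum_comm, mul_add, weightSum, puncturedWeightSum, mul_sum, mul_sum]
  congr 1
  simp only [mul_sum]
  exact Finset.sum_congr rfl fun σ _ => Fintype.sum_equiv σ.symm _ _ fun _ => rfl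

end Excedance

section DescentSum
variable {R : Type*} [CommRing R] {n : ℕ}

theorem prod_isDescent_insertLast (x : Fin (n + 1) → R) (σ : Perm (Fin n)) (k : Fin (n + 1)) :
    ∏ i, (if IsDescent (σ.insertLast k) i then x (σ.insertLast k i) else 1)
      = (if k = last n then 1 else x (last n))
        * ∏ j, if j.succ = k then 1 else if IsDescent σ j then x (castSucc (σ j)) else 1 := by
  have hlt (j : Fin n) : (castSucc ∘ σ) j < last n := castSucc_lt_last _
  simp only [Perm.coe_insertLast]
  rw [prod_univ_succAbove _ k, insertNth_apply_same]
  congr 1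
  · simp [isDescent_insertNth_self hlt, ite_not]
  · refine prod_congr rfl fun j _ => ?_
    simp only [isDescent_insertNth_succAbove hlt, isDescent_comp_strictMono strictMono_castSucc,
      insertNth_apply_succAbove]
    by_cases hj : j.succ = k <;> simp [hj]

theorem sum_ite_last_mul_prod_ite_succ (a : R) (d : Fin n → R)
    (hd : ∀ j : Fin n, (j : ℕ) + 1 = n → d j = 1) :
    ∑ k : Fin (n + 1), (if k = last n then 1 else a) * ∏ j, (if j.succ = k then 1 else d j)
      = ∏ j, d j + a * ∑ c, ∏ j ∈ univ.erase c, d j := by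
  set Q : Fin (n + 1) → R := fun k => ∏ j, if j.succ = k then 1 else d j
  have hQ0 : Q 0 = ∏ j, d j := by simp [Q, succ_ne_zero]
  have hQlast : Q (last n) = ∏ j, d j := prod_congr rfl fun j _ => by
    split_ifs with h
    · rw [hd j (by simpa [Fin.ext_iff] using h)]
    · rfl
  have hQsucc (c : Fin n) : Q c.succ = ∏ j ∈ univ.erase c, d j := by
    simp only [Q, succ_inj]
    rw [← prod_erase_mul _ _ (mem_univ c), if_pos rfl, mul_one]
    exact prod_congr rfl fun j hj => if_neg (ne_of_mem_erase hj)
  have hsplit :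
      ∑ c : Fin n, Q (castSucc c) + Q (last n) = Q 0 + ∑ c, ∏ j ∈ univ.erase c, d j := by
    rw [← sum_univ_castSucc, sum_univ_succ]
    simp only [hQsucc]
  rw [sum_univ_castSucc, if_pos rfl, one_mul]
  simp only [(castSucc_lt_last _).ne, if_false, ← mul_sum]
  linear_combination a * hsplit + (1 - a) * hQlast + a * hQ0

theorem weightSum_isDescent_succ (x : Fin (n + 1) → R) :
    weightSum (fun σ i => IsDescent σ i) x 1
      = weightSum (fun σ i => IsDescent σ i) (x ∘ castSucc) 1
        + x (last n) * puncturedWeightSum (fun σ i => IsDescent σ i) (x ∘ castSucc) 1 := by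
  rw [weightSum, Perm.sum_fin_succ_insertLast, weightSum, puncturedWeightSum, mul_sum,
    ← sum_add_distrib]
  refine Finset.sum_congr rfl fun σ _ => ?_
  simp only [prod_isDescent_insertLast]
  exact sum_ite_last_mul_prod_ite_succ _ _ fun j hj => if_neg (not_isDescent_of_val_add_one_eq hj)

theorem weightSum_excedance_eq_isDescent (x : Fin n → R) :
    weightSum (fun σ i => i < σ i) x 1 = weightSum (fun σ i => IsDescent σ i) x 1 := by
  induction n with
  | zero => simp [weightSum]
  | succ n ih =>
    simp only [weightSum_excedance_succ, weightSum_isDescent_succ, one_mul,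
      puncturedWeightSum_one, ih]

end DescentSum

section Stability
open scoped Polynomial

theorem eval_zero_derivative_prod_X_add_C {ι R : Type*} [CommSemiring R] [DecidableEq ι]
    (s : Finset ι) (a : ι → R) :
    (Polynomial.derivative (∏ i ∈ s, (Polynomial.X + Polynomial.C (a i)))).eval 0
      = ∑ j ∈ s, ∏ i ∈ s.erase j, a i := by
  simp [Polynomial.derivative_prod_finset, Polynomial.eval_finsetSum, Polynomial.eval_prod]

section WeightSumShift
variable {α R : Type*} [Fintype α] [DecidableEq α] [CommSemiring R]
  (P : Perm α → α → Prop) [∀ σ i, Decidable (P σ i)] (x : α → R) (y : R)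

noncomputable def weightSumShift : R[X] :=
  ∑ σ : Perm α, ∏ i, (Polynomial.X + Polynomial.C (if P σ i then x (σ i) else y))

theorem eval_weightSumShift (t : R) :
    (weightSumShift P x y).eval t = weightSum P (fun i => x i + t) (y + t) := by
  simp [weightSumShift, weightSum, Polynomial.eval_finsetSum, Polynomial.eval_prod,
    apply_ite (· + t), add_comm t]

theorem eval_zero_derivative_weightSumShift :
    (Polynomial.derivative (weightSumShift P x y)).eval 0 = puncturedWeightSum P x y := by
  simp [weightSumShift, puncturedWeightSum, Polynomial.eval_finsetSum,
    eval_zero_derivative_prod_X_add_C]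

end WeightSumShift

theorem im_eval_derivative_div_eval_nonpos {p : ℂ[X]} {w : ℂ} (hw : p.eval w ≠ 0)
    (hroots : ∀ z, p.IsRoot z → z.im ≤ w.im) :
    (p.derivative.eval w / p.eval w).im ≤ 0 := by
  rw [(IsAlgClosed.splits p).eval_derivative_div_eval_of_ne_zero hw, ← Complex.coe_imAddGroupHom,
    map_multiset_sum, Multiset.map_map]
  refine (Multiset.sum_le_card_nsmul _ 0 fun t ht => ?_).trans_eq (smul_zero _)
  obtain ⟨z, hz, rfl⟩ := Multiset.mem_map.mp ht
  have := hroots z (Polynomial.isRoot_of_mem_roots hz)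
  simp only [Function.comp_apply, Complex.coe_imAddGroupHom, one_div, Complex.inv_im,
    Complex.sub_im]
  exact div_nonpos_of_nonpos_of_nonneg (by linarith) (Complex.normSq_nonneg _)

theorem im_nonpos_of_add_mul_eq_zero {h b z : ℂ} (hh : h ≠ 0) (hb : (b / h).im ≤ 0)
    (hz : h + z * b = 0) : z.im ≤ 0 := by
  have hb0 : b ≠ 0 := by rintro rfl; simp_all
  have : z = -(b / h)⁻¹ := by field_simp; linear_combination hz
  rw [this, Complex.neg_im, Complex.inv_im, neg_div, neg_neg]
  exact div_nonpos_of_nonpos_of_nonneg hb (Complex.normSq_nonneg _)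

theorem weightSum_excedance_ne_zero {n : ℕ} (x : Fin n → ℂ) (y : ℂ)
    (hx : ∀ i, 0 < (x i).im) (hy : 0 ≤ y.im) (hy0 : y ≠ 0) :
    weightSum (fun σ i => i < σ i) x y ≠ 0 := by
  induction n generalizing y with
  | zero => simp [weightSum]
  | succ n ih =>
    have hH := ih (x ∘ castSucc) y (fun i => hx _) hy hy0
    set G := weightSumShift (fun σ i => i < σ i) (x ∘ castSucc) y
    have hG0 : G.eval 0 = weightSum (fun σ i => i < σ i) (x ∘ castSucc) y := by
      simp only [G, eval_weightSumShift, add_zero]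
    have hroots (z : ℂ) (hz : G.IsRoot z) : z.im ≤ (0 : ℂ).im := by
      by_contra! hz'
      rw [Complex.zero_im] at hz'
      refine ih _ (y + z) (fun i => ?_) (by rw [Complex.add_im]; linarith) (fun h => ?_)
        ((eval_weightSumShift ..).symm.trans hz)
      · rw [Complex.add_im]
        exact add_pos (hx _) hz'
      · have := congrArg Complex.im h
        rw [Complex.add_im, Complex.zero_im] at this
        linarith
    have hratio := im_eval_derivative_div_eval_nonpos (hG0 ▸ hH) hroots
    rw [eval_zero_derivative_weightSumShift, hG0] at hratio
    rw [weightSum_excedance_succ]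
    exact mul_ne_zero hy0 fun h => (hx (last n)).not_ge (im_nonpos_of_add_mul_eq_zero hH hratio h)

end Stability

theorem mvEulerianExc_eq_weightSum (n : ℕ) :
    mvEulerianExc n = weightSum (fun σ i => i < σ i) X 1 := by
  simp only [mvEulerianExc, weightSum, prod_filter]

theorem mvEulerianDes_eq_weightSum (n : ℕ) :
    mvEulerianDes n = weightSum (fun σ i => IsDescent σ i) X 1 := by
  refine Finset.sum_congr rfl fun σ _ => prod_congr rfl fun i _ => ?_
  by_cases h : (i : ℕ) + 1 < n
  · simp [h, isDescent_iff (j := ⟨i + 1, h⟩) rfl]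
  · simp [h, IsDescent]

/-- The multivariate Eulerian polynomial (over excedances) is real stable, and
it coincides with the sum over permutations of the product of the
descent-top variables. -/
theorem mvEulerian_stable_and_eq (n : ℕ) :
    RealStable (mvEulerianExc n) ∧ mvEulerianExc n = mvEulerianDes n := by
  refine ⟨Or.inr fun w hw => ?_, ?_⟩
  · have h := map_weightSum (fun σ i => i < σ i)
      ((eval w).comp (map (algebraMap ℝ ℂ))) X 1
    simp only [RingHom.comp_apply, ← mvEulerianExc_eq_weightSum, map_one, Function.comp_def,
      map_X, eval_X] at h
    rw [h]
    exact weightSum_excedance_ne_zero w 1 hw (by simp) one_ne_zero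
  · rw [mvEulerianExc_eq_weightSum, mvEulerianDes_eq_weightSum, weightSum_excedance_eq_isDescent]
end

section
/- For 2 ≤ i < j ≤ n, let Top(i;n) be the number of permutations in S_n having i as a descent top, Top(j;n) the number having j as a descent top, and Top(i,j;n) the number having both i and j as descent tops. Then Top(i;n)·Top(j;n) ≥ n!·Top(i,j;n); equivalently, occurrences of descent tops in a uniformly random permutation of {1,…,n} are pairwise negatively correlated. -/
/-- `a` is a descent top of `σ`: some position is occupied by `a` and the next
position holds a smaller value. -/
def IsDescentTop {n : ℕ} (σ : Equiv.Perm (Fin n)) (a : Fin n) : Prop :=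
  ∃ i : Fin n, ∃ h : (i : ℕ) + 1 < n, σ i = a ∧ σ ⟨(i : ℕ) + 1, h⟩ < a

open Classical in
/-- `TopCount(a;n)`: the number of permutations in `S_n` having `a` as a descent top. -/
noncomputable def TopCount {n : ℕ} (a : Fin n) : ℕ :=
  (Finset.univ.filter fun σ : Equiv.Perm (Fin n) => IsDescentTop σ a).card

open Classical in
/-- `TopCount(a,b;n)`: the number of permutations in `S_n` having both `a` and `b`
as descent tops. -/
noncomputable def TopCount₂ {n : ℕ} (a b : Fin n) : ℕ :=
  (Finset.univ.filter fun σ : Equiv.Perm (Fin n) =>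
    IsDescentTop σ a ∧ IsDescentTop σ b).card

/-!
Record a permutation `σ` by its position map `τ = σ⁻¹`: then `a` is a descent top of `σ` iff
some `x < a` satisfies `τ x = τ a + 1`. As `Perm (Fin n)` acts transitively on injective
`k`-tuples with stabilisers of order `(n - k)!`, the permutations putting `k` given values on
positions that satisfy some constraint number `(n - k)!` times the admissible position tuples.
Hence `a` is immediately followed by a given value in `(n - 1)!` permutations, and `a → x`,
`b → y` occur together in `(n - 2)!` permutations, whether the two blocks are disjoint or chain
as `b a x`. With values counted from `0` this gives `TopCount a = a (n - 1)!` and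
`TopCount₂ a b = a (b - 1) (n - 2)!`, and the inequality becomes `n (b - 1) ≤ (n - 1) b`, that is
`b ≤ n`.
-/

open Finset Equiv
open scoped Nat

section Embedding

variable {α β : Type*} [Fintype α] [DecidableEq α] [Fintype β]

theorem Equiv.Perm.card_smul_embedding_eq (ι e : β ↪ α) :
    #{τ : Perm α | τ • ι = e} = (Fintype.card α - Fintype.card β)! := by
  have hfiber (e : β ↪ α) : #{τ : Perm α | τ • ι = e} = #{τ : Perm α | τ • ι = ι} := by
    obtain ⟨g, rfl⟩ := Perm.exists_smul_eq_embedding ι e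
    refine card_nbij' (g⁻¹ * ·) (g * ·) ?_ ?_ ?_ ?_ <;> intro τ hτ <;>
      simp_all [mul_smul]
  have hsum : ∑ e : β ↪ α, #{τ : Perm α | τ • ι = e} = (Fintype.card α)! := by
    rw [← Fintype.card_perm, ← Finset.card_univ]
    exact (card_eq_sum_card_fiberwise fun τ _ => mem_univ (τ • ι)).symm
  have hle : Fintype.card β ≤ Fintype.card α := Fintype.card_le_of_embedding ι
  rw [← Nat.factorial_mul_descFactorial hle] at hsum
  simp only [hfiber, sum_const, Finset.card_univ, Fintype.card_embedding_eq, smul_eq_mul] at hsum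
  rw [hfiber]
  exact Nat.eq_of_mul_eq_mul_right (Nat.descFactorial_pos.2 hle) (by rw [← hsum, mul_comm])

theorem Equiv.Perm.card_filter_smul_embedding (ι : β ↪ α) (P : (β ↪ α) → Prop)
    [DecidablePred P] :
    #{τ : Perm α | P (τ • ι)} = #{e : β ↪ α | P e} * (Fintype.card α - Fintype.card β)! := by
  rw [card_eq_sum_card_fiberwise (f := (· • ι)) (t := {e | P e}) fun τ hτ => by simpa using hτ,
    sum_const_nat fun e he => ?_]
  rw [← Perm.card_smul_embedding_eq ι e, filter_filter]
  congr 1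
  ext τ
  simp only [mem_filter, mem_univ, true_and, and_iff_right_iff_imp]
  rintro rfl
  simpa using he

theorem Equiv.Perm.card_filter_inv (P : Perm α → Prop) [DecidablePred P] :
    #{σ : Perm α | P σ⁻¹} = #{σ : Perm α | P σ} :=
  card_equiv (Equiv.inv (Perm α)) (by simp)

end Embedding

theorem Finset.card_filter_exists_mem_eq_sum {γ ι : Type*} [Fintype γ] [DecidableEq γ]
    (s : Finset ι) (Q : γ → ι → Prop) [∀ i, DecidablePred (Q · i)]
    [DecidablePred fun c => ∃ i ∈ s, Q c i]
    (hQ : ∀ c i j, Q c i → Q c j → i = j) :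
    #{c | ∃ i ∈ s, Q c i} = ∑ i ∈ s, #{c | Q c i} := by
  rw [← card_biUnion fun i _ j _ hij => disjoint_filter.2 fun c _ hi hj => hij (hQ c i j hi hj)]
  congr 1
  ext c
  simp

section ConsecutivePositions

variable {n : ℕ}

theorem card_embedding_fin_two_consecutive :
    #{e : Fin 2 ↪ Fin n | (e 1 : ℕ) = e 0 + 1} = n - 1 := by
  rw [← card_range (n - 1)]
  refine card_bij (fun e _ => (e 0 : ℕ)) (fun e he => ?_) (fun e he e' he' h => ?_) fun p hp => ?_
  · simp only [mem_filter, mem_univ, true_and] at he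
    simp only [mem_range]
    omega
  · simp only [mem_filter, mem_univ, true_and] at he he'
    ext i; fin_cases i <;> simp <;> omega
  · simp only [mem_range] at hp
    have hinj : Function.Injective ![(⟨p, by omega⟩ : Fin n), ⟨p + 1, by omega⟩] := by
      intro i j; fin_cases i <;> fin_cases j <;> simp
    exact ⟨⟨_, hinj⟩, by simp, rfl⟩

theorem card_embedding_fin_three_consecutive :
    #{e : Fin 3 ↪ Fin n | (e 1 : ℕ) = e 0 + 1 ∧ (e 2 : ℕ) = e 1 + 1} = n - 2 := by
  rw [← card_range (n - 2)]
  refine card_bij (fun e _ => (e 0 : ℕ)) (fun e he => ?_) (fun e he e' he' h => ?_) fun p hp => ?_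
  · simp only [mem_filter, mem_univ, true_and] at he
    simp only [mem_range]
    omega
  · simp only [mem_filter, mem_univ, true_and] at he he'
    ext i; fin_cases i <;> simp <;> omega
  · simp only [mem_range] at hp
    have hinj : Function.Injective
        ![(⟨p, by omega⟩ : Fin n), ⟨p + 1, by omega⟩, ⟨p + 2, by omega⟩] := by
      intro i j; fin_cases i <;> fin_cases j <;> simp
    exact ⟨⟨_, hinj⟩, by simp, rfl⟩

/-- Shifting the later block left by one turns the two block starts into two distinct elements
of `range (n - 2)`. -/
theorem card_embedding_fin_four_consecutive_pairs :
    #{e : Fin 4 ↪ Fin n | (e 1 : ℕ) = e 0 + 1 ∧ (e 3 : ℕ) = e 2 + 1} = (n - 2) * (n - 3) := by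
  have hoff : (n - 2) * (n - 3) = #(range (n - 2)).offDiag := by
    rw [offDiag_card, card_range, ← Nat.mul_sub_one, Nat.sub_sub]
  have hsep (e : Fin 4 ↪ Fin n) : (e 0 : ℕ) ≠ e 2 ∧ (e 0 : ℕ) ≠ e 3 ∧ (e 1 : ℕ) ≠ e 2 := by
    simp only [← Fin.ext_iff, ne_eq, e.injective.eq_iff]
    decide
  rw [hoff]
  refine card_bij (fun e _ => (if (e 2 : ℕ) < e 0 then (e 0 : ℕ) - 1 else e 0,
      if (e 0 : ℕ) < e 2 then (e 2 : ℕ) - 1 else e 2))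
    (fun e he => ?_) (fun e he e' he' h => ?_) fun pq hpq => ?_
  · simp only [mem_filter, mem_univ, true_and] at he
    have := hsep e
    simp only [mem_offDiag, mem_range, Ne]
    split_ifs <;> omega
  · simp only [mem_filter, mem_univ, true_and] at he he'
    have := hsep e
    have := hsep e'
    simp only [Prod.mk.injEq] at h
    ext i; fin_cases i <;> simp <;> split_ifs at h <;> omega
  · obtain ⟨p, q⟩ := pq
    simp only [mem_offDiag, mem_range] at hpq
    rcases lt_or_gt_of_ne hpq.2.2 with hpq' | hqp
    · have hinj : Function.Injective ![(⟨p, by omega⟩ : Fin n), ⟨p + 1, by omega⟩,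
          ⟨q + 1, by omega⟩, ⟨q + 2, by omega⟩] := by
        intro i j; fin_cases i <;> fin_cases j <;> simp <;> omega
      exact ⟨⟨_, hinj⟩, by simp, by simp; grind⟩
    · have hinj : Function.Injective ![(⟨p + 1, by omega⟩ : Fin n), ⟨p + 2, by omega⟩,
          ⟨q, by omega⟩, ⟨q + 1, by omega⟩] := by
        intro i j; fin_cases i <;> fin_cases j <;> simp <;> omega
      exact ⟨⟨_, hinj⟩, by simp, by simp; grind⟩

end ConsecutivePositions

section Adjacent

open scoped Classical

variable {n : ℕ}

/-- `v` immediately follows `u` in the word `τ⁻¹`: here `τ` sends each value to its position. -/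
def Adjacent (τ : Perm (Fin n)) (u v : Fin n) : Prop :=
  (τ v : ℕ) = τ u + 1

theorem Adjacent.right_unique {τ : Perm (Fin n)} {u v w : Fin n} (hv : Adjacent τ u v)
    (hw : Adjacent τ u w) : v = w :=
  τ.injective (Fin.ext (hv.trans hw.symm))

theorem Adjacent.left_unique {τ : Perm (Fin n)} {u v w : Fin n} (hu : Adjacent τ u w)
    (hv : Adjacent τ v w) : u = v :=
  τ.injective (Fin.ext (by unfold Adjacent at hu hv; omega))

theorem isDescentTop_iff_exists_adjacent (σ : Perm (Fin n)) (a : Fin n) :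
    IsDescentTop σ a ↔ ∃ x < a, Adjacent σ⁻¹ a x := by
  constructor
  · rintro ⟨i, hi, rfl, hlt⟩
    exact ⟨_, hlt, by simp [Adjacent]⟩
  · rintro ⟨x, hxa, hx⟩
    have hpos : σ⁻¹ x = ⟨(σ⁻¹ a : ℕ) + 1, hx ▸ (σ⁻¹ x).isLt⟩ := Fin.ext hx
    exact ⟨σ⁻¹ a, hx ▸ (σ⁻¹ x).isLt, by simp, by rw [← hpos]; simpa⟩

theorem card_adjacent {u v : Fin n} (huv : u ≠ v) :
    #{τ : Perm (Fin n) | Adjacent τ u v} = (n - 1)! := by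
  have hinj : Function.Injective ![u, v] := by
    intro i j; fin_cases i <;> fin_cases j <;> simp [huv, huv.symm]
  let ι : Fin 2 ↪ Fin n := ⟨_, hinj⟩
  have hn : 2 ≤ n := by simpa using Fintype.card_le_of_embedding ι
  calc #{τ : Perm (Fin n) | Adjacent τ u v}
      = #{τ : Perm (Fin n) | ((τ • ι) 1 : ℕ) = (τ • ι) 0 + 1} := by
        simp only [Adjacent, ι, Function.Embedding.smul_apply]; congr
    _ = (n - 1) * (n - 1 - 1)! := by
      rw [Perm.card_filter_smul_embedding ι fun e => (e 1 : ℕ) = e 0 + 1,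
        card_embedding_fin_two_consecutive, Fintype.card_fin, Fintype.card_fin, Nat.sub_sub]
    _ = (n - 1)! := Nat.mul_factorial_pred (by omega)

theorem card_adjacent_and_adjacent_chain {a b x : Fin n} (hba : b ≠ a) (hax : a ≠ x)
    (hbx : b ≠ x) :
    #{τ : Perm (Fin n) | Adjacent τ b a ∧ Adjacent τ a x} = (n - 2)! := by
  have hinj : Function.Injective ![b, a, x] := by
    intro i j; fin_cases i <;> fin_cases j <;> simp [*, Ne.symm]
  let ι : Fin 3 ↪ Fin n := ⟨_, hinj⟩
  have hn : 3 ≤ n := by simpa using Fintype.card_le_of_embedding ι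
  calc #{τ : Perm (Fin n) | Adjacent τ b a ∧ Adjacent τ a x}
      = #{τ : Perm (Fin n) | ((τ • ι) 1 : ℕ) = (τ • ι) 0 + 1 ∧
          ((τ • ι) 2 : ℕ) = (τ • ι) 1 + 1} := by
        simp only [Adjacent, ι, Function.Embedding.smul_apply]; congr
    _ = (n - 2) * (n - 2 - 1)! := by
      rw [Perm.card_filter_smul_embedding ι fun e => (e 1 : ℕ) = e 0 + 1 ∧ (e 2 : ℕ) = e 1 + 1,
        card_embedding_fin_three_consecutive, Fintype.card_fin, Fintype.card_fin, Nat.sub_sub]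
    _ = (n - 2)! := Nat.mul_factorial_pred (by omega)

theorem card_adjacent_and_adjacent_disjoint {a b x y : Fin n} (hab : a ≠ b) (hax : a ≠ x)
    (hay : a ≠ y) (hxb : x ≠ b) (hxy : x ≠ y) (hby : b ≠ y) :
    #{τ : Perm (Fin n) | Adjacent τ a x ∧ Adjacent τ b y} = (n - 2)! := by
  have hinj : Function.Injective ![a, x, b, y] := by
    intro i j; fin_cases i <;> fin_cases j <;> simp [*, Ne.symm]
  let ι : Fin 4 ↪ Fin n := ⟨_, hinj⟩
  have hn : 4 ≤ n := by simpa using Fintype.card_le_of_embedding ι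
  calc #{τ : Perm (Fin n) | Adjacent τ a x ∧ Adjacent τ b y}
      = #{τ : Perm (Fin n) | ((τ • ι) 1 : ℕ) = (τ • ι) 0 + 1 ∧
          ((τ • ι) 3 : ℕ) = (τ • ι) 2 + 1} := by
        simp only [Adjacent, ι, Function.Embedding.smul_apply]; congr
    _ = (n - 2) * (n - 2 - 1) * (n - 2 - 1 - 1)! := by
      rw [Perm.card_filter_smul_embedding ι fun e => (e 1 : ℕ) = e 0 + 1 ∧ (e 3 : ℕ) = e 2 + 1,
        card_embedding_fin_four_consecutive_pairs, Fintype.card_fin, Fintype.card_fin,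
        Nat.sub_sub, Nat.sub_sub]
    _ = (n - 2)! := by
      rw [mul_assoc, Nat.mul_factorial_pred (by omega), Nat.mul_factorial_pred (by omega)]

theorem sum_card_adjacent_and_adjacent {a b x : Fin n} (hxa : x < a) (hab : a < b) :
    ∑ y ∈ Iio b, #{τ : Perm (Fin n) | Adjacent τ a x ∧ Adjacent τ b y} = (b - 1) * (n - 2)! := by
  have hxb : x ∈ Iio b := mem_Iio.2 (hxa.trans hab)
  have hxx : #{τ : Perm (Fin n) | Adjacent τ a x ∧ Adjacent τ b x} = 0 :=
    card_eq_zero.2 (filter_eq_empty_iff.2 fun τ _ h => hab.ne (h.1.left_unique h.2))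
  have hrest (y) (hy : y ∈ (Iio b).erase x) :
      #{τ : Perm (Fin n) | Adjacent τ a x ∧ Adjacent τ b y} = (n - 2)! := by
    obtain ⟨hyx, hyb⟩ : y ≠ x ∧ y < b := by simpa using hy
    rcases eq_or_ne y a with rfl | hya
    · simp_rw [and_comm (a := Adjacent _ y x)]
      exact card_adjacent_and_adjacent_chain hyb.ne' hxa.ne' (hxa.trans hyb).ne'
    · exact card_adjacent_and_adjacent_disjoint hab.ne hxa.ne' hya.symm (hxa.trans hab).ne
        hyx.symm hyb.ne'
  rw [← add_sum_erase _ _ hxb, hxx, zero_add, sum_congr rfl hrest, sum_const, smul_eq_mul,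
    card_erase_of_mem hxb, Fin.card_Iio]

theorem topCount_eq (a : Fin n) : TopCount a = a * (n - 1)! := by
  calc TopCount a = #{τ : Perm (Fin n) | ∃ x ∈ Iio a, Adjacent τ a x} := by
        rw [TopCount, ← Perm.card_filter_inv]
        simp [isDescentTop_iff_exists_adjacent]
    _ = ∑ x ∈ Iio a, (n - 1)! := by
        rw [card_filter_exists_mem_eq_sum _ (fun τ x => Adjacent τ a x) fun τ x y =>
          Adjacent.right_unique]
        exact sum_congr rfl fun x hx => card_adjacent (mem_Iio.1 hx).ne'
    _ = a * (n - 1)! := by simp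

theorem topCount₂_eq {a b : Fin n} (hab : a < b) :
    TopCount₂ a b = a * ((b - 1) * (n - 2)!) := by
  calc TopCount₂ a b
      = #{τ : Perm (Fin n) | ∃ p ∈ Iio a ×ˢ Iio b, Adjacent τ a p.1 ∧ Adjacent τ b p.2} := by
        rw [TopCount₂, ← Perm.card_filter_inv]
        congr 1
        ext τ
        simp only [mem_filter, mem_univ, true_and, isDescentTop_iff_exists_adjacent, mem_product,
          mem_Iio, Prod.exists]
        aesop
    _ = ∑ x ∈ Iio a, ∑ y ∈ Iio b, #{τ : Perm (Fin n) | Adjacent τ a x ∧ Adjacent τ b y} := by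
        rw [card_filter_exists_mem_eq_sum _ (fun τ p => Adjacent τ a p.1 ∧ Adjacent τ b p.2)
          fun τ p q hp hq =>
          Prod.ext (hp.1.right_unique hq.1) (hp.2.right_unique hq.2), sum_product]
    _ = ∑ x ∈ Iio a, (b - 1) * (n - 2)! :=
        sum_congr rfl fun x hx => sum_card_adjacent_and_adjacent (mem_Iio.1 hx) hab
    _ = a * ((b - 1) * (n - 2)!) := by simp

end Adjacent

/-- The values `i < j` of `{1, …, n}` are `a + 1 < b + 1`. -/
theorem descent_tops_negatively_correlated_general (n : ℕ) (a b : Fin n)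
    (hab : a < b) :
    n.factorial * TopCount₂ a b ≤ TopCount a * TopCount b := by
  have hab' : (a : ℕ) < b := hab
  obtain ⟨m, rfl⟩ : ∃ m, n = m + 2 := ⟨n - 2, by omega⟩
  obtain ⟨c, hc⟩ : ∃ c, (b : ℕ) = c + 1 := ⟨b - 1, by omega⟩
  have key : (m + 2) * c ≤ (m + 1) * (c + 1) := by nlinarith [b.isLt]
  rw [topCount₂_eq hab, topCount_eq, topCount_eq, hc, Nat.add_sub_cancel, Nat.add_sub_cancel,
    show m + 2 - 1 = m + 1 by omega, Nat.factorial_succ (m + 1), Nat.factorial_succ m]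
  calc (m + 2) * ((m + 1) * m !) * (a * (c * m !))
      = a * (m + 1) * m ! * m ! * ((m + 2) * c) := by ring
    _ ≤ a * (m + 1) * m ! * m ! * ((m + 1) * (c + 1)) := Nat.mul_le_mul_left _ key
    _ = a * ((m + 1) * m !) * ((c + 1) * ((m + 1) * m !)) := by ring

/-- For `2 ≤ i < j ≤ n` (here `a` and `b` are the elements of `{1,…,n}` with
`2 ≤ a < b`, encoded in `Fin n` with values shifted down by one, so `1 ≤ a.val`):
`TopCount(i;n)·TopCount(j;n) ≥ n!·TopCount(i,j;n)`, i.e. descent tops of a uniformly random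
permutation are pairwise negatively correlated. -/
theorem descent_tops_negatively_correlated (n : ℕ) (a b : Fin n)
    (ha : 1 ≤ (a : ℕ)) (hab : a < b) :
    n.factorial * TopCount₂ a b ≤ TopCount a * TopCount b :=
  descent_tops_negatively_correlated_general n a b hab
end

section
/- Let f(t) and g(t) be complex polynomials of degree n, let φ(t) = (at+b)/(ct+d) be a Möbius transformation (ad − bc ≠ 0) with inverse φ^{-1}(t) = (αt+β)/(γt+δ), and set f̂(t) = (γt+δ)^n f(φ^{-1}(t)) and ĝ(t) = (γt+δ)^n g(φ^{-1}(t)). If f̂ and ĝ both have degree n, then f̂ and ĝ are apolar if and only if f and g are apolar. -/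
/-
Möbius maps are generated by translations `t ↦ t + r`, dilations `t ↦ c t` and the inversion
`t ↦ 1/t`; on polynomials of degree `≤ n` the induced maps `f ↦ (γt+δ)^n f(φ⁻¹ t)` are `taylor r`,
`comp (C c * X)` and `reflect n`, which multiply the apolarity form by `1`, `c ^ n` and `(-1) ^ n`.
Composing them gives the factor `(αδ - βγ) ^ n ≠ 0`. Translation invariance holds because
`Σ_k (-1)^k f^{(k)} g^{(n-k)}` has telescoping, hence zero, derivative, while its value at `r`
is `(-1)^n n!` times the apolarity form of `f` and `g` re-expanded around `r`. The nondegeneracy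
condition transfers because the coefficient of `t ^ n` is the leading coefficient and the
transformation is injective.
-/

open Polynomial

/-- The apolarity form of two complex polynomials regarded as having degree `n`:
`Σ_{k=0}^n C(n,k) (-1)^{n-k} a_k b_{n-k}` where `a_k = f.coeff k / C(n,k)` and
`b_k = g.coeff k / C(n,k)`. -/
noncomputable def apolarSum (n : ℕ) (f g : Polynomial ℂ) : ℂ :=
  ∑ k ∈ Finset.range (n + 1),
    (-1) ^ (n - k) * f.coeff k * g.coeff (n - k) / (n.choose k : ℂ)

/-- Two complex polynomials of degree `n` are apolar if `a_n b_n ≠ 0` and the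
apolarity form vanishes. -/
noncomputable def Apolar (n : ℕ) (f g : Polynomial ℂ) : Prop :=
  f.coeff n * g.coeff n ≠ 0 ∧ apolarSum n f g = 0

namespace Polynomial

variable {K : Type*} [Field K]

theorem eq_of_eval_eq_of_eval_ne_zero [Infinite K] {p q r : K[X]} (hq : q ≠ 0)
    (h : ∀ t, q.eval t ≠ 0 → p.eval t = r.eval t) : p = r := by
  have hmul : (p - r) * q = 0 := Polynomial.funext fun t => by
    by_cases ht : q.eval t = 0
    · simp [ht]
    · simp [h t ht]
  simpa [sub_eq_zero] using (mul_eq_zero.mp hmul).resolve_right hq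

theorem eval_reflect {N : ℕ} {f : K[X]} (hf : f.natDegree ≤ N) {t : K} (ht : t ≠ 0) :
    (reflect N f).eval t = t ^ N * f.eval t⁻¹ := by
  let := invertibleOfNonzero (inv_ne_zero ht)
  have h := eval₂_reflect_mul_pow (RingHom.id K) t⁻¹ N f hf
  rw [invOf_eq_inv, inv_inv] at h
  rw [eval, eval, ← h, inv_pow, mul_left_comm, mul_inv_cancel₀ (pow_ne_zero N ht), mul_one]

theorem natDegree_comp_C_mul_X_le (p : K[X]) (c : K) :
    (p.comp (C c * X)).natDegree ≤ p.natDegree :=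
  natDegree_le_iff_coeff_eq_zero.mpr fun k hk => by
    rw [comp_C_mul_X_coeff, coeff_eq_zero_of_natDegree_lt hk, zero_mul]

theorem eval_iterate_derivative {R : Type*} [CommSemiring R] (f : R[X]) (k : ℕ) (r : R) :
    (derivative^[k] f).eval r = k.factorial * (taylor r f).coeff k := by
  rw [taylor_coeff, ← factorial_smul_hasseDeriv]
  simp [nsmul_eq_mul]

end Polynomial

noncomputable def apolarWronskian {R : Type*} [CommRing R] (n : ℕ) (f g : R[X]) : R[X] :=
  ∑ k ∈ Finset.range (n + 1), C ((-1) ^ k) * (derivative^[k] f * derivative^[n - k] g)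

theorem derivative_apolarWronskian {R : Type*} [CommRing R] {n : ℕ} {f g : R[X]}
    (hf : f.natDegree ≤ n) (hg : g.natDegree ≤ n) :
    derivative (apolarWronskian n f g) = 0 := by
  set v : ℕ → R[X] := fun k => C ((-1) ^ k) * (derivative^[k] f * derivative^[n + 1 - k] g)
  have hterm : ∀ k ∈ Finset.range (n + 1),
      derivative (C ((-1) ^ k) * (derivative^[k] f * derivative^[n - k] g)) = v k - v (k + 1) := by
    intro k hk
    have hkn : n + 1 - k = n - k + 1 := Nat.sub_add_comm (Finset.mem_range_succ_iff.mp hk)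
    rw [derivative_C_mul, derivative_mul]
    simp only [v, hkn, Nat.add_sub_add_right, Function.iterate_succ_apply', pow_succ, C_mul,
      C_neg, C_1]
    ring
  have hv0 : v 0 = 0 := by simp [v, iterate_derivative_eq_zero (Nat.lt_succ_of_le hg)]
  have hvn : v (n + 1) = 0 := by simp [v, iterate_derivative_eq_zero (Nat.lt_succ_of_le hf)]
  rw [apolarWronskian, derivative_sum, Finset.sum_congr rfl hterm, Finset.sum_range_sub', hv0,
    hvn, sub_zero]

theorem eval_apolarWronskian (n : ℕ) (f g : ℂ[X]) (r : ℂ) :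
    (apolarWronskian n f g).eval r =
      (-1) ^ n * n.factorial * apolarSum n (taylor r f) (taylor r g) := by
  rw [apolarWronskian, eval_finsetSum, apolarSum, Finset.mul_sum]
  refine Finset.sum_congr rfl fun k hk => ?_
  obtain ⟨j, rfl⟩ := Nat.exists_eq_add_of_le (Finset.mem_range_succ_iff.mp hk)
  have hfact : ((k + j).choose k * k.factorial * j.factorial : ℂ) = (k + j).factorial := by
    have h := Nat.choose_mul_factorial_mul_factorial (Nat.le_add_right k j)
    rw [Nat.add_sub_cancel_left] at h
    exact_mod_cast h
  have hchoose : ((k + j).choose k : ℂ) ≠ 0 :=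
    mod_cast (Nat.choose_pos (Nat.le_add_right k j)).ne'
  simp only [Nat.add_sub_cancel_left, eval_mul, eval_C, eval_iterate_derivative]
  rw [← hfact, pow_add]
  field_simp
  rw [← pow_mul', pow_mul, neg_one_sq, one_pow, mul_one]

theorem apolarSum_taylor {n : ℕ} {f g : ℂ[X]} (hf : f.natDegree ≤ n) (hg : g.natDegree ≤ n)
    (r : ℂ) : apolarSum n (taylor r f) (taylor r g) = apolarSum n f g := by
  have hconst := eq_C_of_derivative_eq_zero (derivative_apolarWronskian hf hg)
  have h : (apolarWronskian n f g).eval r = (apolarWronskian n f g).eval 0 := by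
    rw [hconst, eval_C, eval_C]
  rw [eval_apolarWronskian, eval_apolarWronskian, taylor_zero, taylor_zero] at h
  refine mul_left_cancel₀ (mul_ne_zero (pow_ne_zero _ (neg_ne_zero.mpr one_ne_zero)) ?_) h
  exact_mod_cast n.factorial_ne_zero

theorem apolarSum_C_mul_C_mul (n : ℕ) (s : ℂ) (f g : ℂ[X]) :
    apolarSum n (C s * f) (C s * g) = s ^ 2 * apolarSum n f g := by
  rw [apolarSum, apolarSum, Finset.mul_sum]
  refine Finset.sum_congr rfl fun k _ => ?_
  rw [coeff_C_mul, coeff_C_mul]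
  ring

theorem apolarSum_comp_C_mul_X (n : ℕ) (c : ℂ) (f g : ℂ[X]) :
    apolarSum n (f.comp (C c * X)) (g.comp (C c * X)) = c ^ n * apolarSum n f g := by
  rw [apolarSum, apolarSum, Finset.mul_sum]
  refine Finset.sum_congr rfl fun k hk => ?_
  have hpow : c ^ k * c ^ (n - k) = c ^ n := by
    rw [← pow_add, Nat.add_sub_cancel' (Finset.mem_range_succ_iff.mp hk)]
  rw [comp_C_mul_X_coeff, comp_C_mul_X_coeff, ← hpow]
  ring

theorem apolarSum_reflect (n : ℕ) (f g : ℂ[X]) :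
    apolarSum n (reflect n f) (reflect n g) = (-1) ^ n * apolarSum n f g := by
  rw [apolarSum, apolarSum, Finset.mul_sum, ← Finset.sum_range_reflect]
  refine Finset.sum_congr rfl fun k hk => ?_
  have hkn : k ≤ n := Finset.mem_range_succ_iff.mp hk
  obtain ⟨j, rfl⟩ := Nat.exists_eq_add_of_le hkn
  simp only [coeff_reflect, revAt_le hkn, revAt_le (Nat.le_add_left j k), Nat.add_sub_cancel,
    Nat.add_sub_cancel_left]
  have hsq : (-1 : ℂ) ^ j * (-1) ^ j = 1 := by rw [← mul_pow, neg_one_mul, neg_neg, one_pow]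
  rw [pow_add, Nat.choose_symm_add]
  linear_combination -(-1) ^ k * f.coeff k * g.coeff j / ((k + j).choose j : ℂ) * hsq

section Mobius

variable {K : Type*} [Field K]

def IsMobiusTransform (n : ℕ) (α β γ δ : K) (f fh : K[X]) : Prop :=
  ∀ t : K, γ * t + δ ≠ 0 → fh.eval t = (γ * t + δ) ^ n * f.eval ((α * t + β) / (γ * t + δ))

theorem IsMobiusTransform.eq_taylor_reflect [Infinite K] {n : ℕ} {α β γ δ : K} {f fh : K[X]}
    (hfh : IsMobiusTransform n α β γ δ f fh) (hγ : γ ≠ 0) (hf : f.natDegree ≤ n) :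
    fh = taylor (δ / γ)
      ((reflect n ((taylor (α / γ) f).comp (C (-(α * δ - β * γ) / γ) * X))).comp (C γ * X)) := by
  refine eq_of_eval_eq_of_eval_ne_zero (X_add_C_ne_zero (δ / γ)) fun t ht => ?_
  have hu : γ * (t + δ / γ) = γ * t + δ := by field_simp
  have hne : γ * t + δ ≠ 0 := by
    rw [← hu]
    exact mul_ne_zero hγ (by simpa using ht)
  have hdeg : ((taylor (α / γ) f).comp (C (-(α * δ - β * γ) / γ) * X)).natDegree ≤ n :=
    (natDegree_comp_C_mul_X_le _ _).trans ((natDegree_taylor f _).trans_le hf)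
  rw [hfh t hne, taylor_eval, eval_comp, eval_mul, eval_C, eval_X, hu, eval_reflect hdeg hne,
    eval_comp, eval_mul, eval_C, eval_X, taylor_eval]
  congr 2
  -- `(αt+β)/(γt+δ) = α/γ - (αδ-βγ)/(γ (γt+δ))`
  rw [div_eq_iff hne, add_mul, mul_assoc, inv_mul_cancel₀ hne]
  field_simp
  ring

theorem IsMobiusTransform.eq_C_mul_taylor [Infinite K] {n : ℕ} {α β δ : K} {f fh : K[X]}
    (hfh : IsMobiusTransform n α β 0 δ f fh) (hδ : δ ≠ 0) :
    fh = C (δ ^ n) * (taylor (β / δ) f).comp (C (α / δ) * X) := by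
  refine Polynomial.funext fun t => ?_
  rw [hfh t (by simpa using hδ), eval_mul, eval_C, eval_comp, eval_mul, eval_C, eval_X,
    taylor_eval, zero_mul, zero_add]
  congr 2
  field_simp

theorem IsMobiusTransform.eq_zero_iff [Infinite K] {n : ℕ} {α β γ δ : K} {f fh : K[X]}
    (hfh : IsMobiusTransform n α β γ δ f fh) (hΔ : α * δ - β * γ ≠ 0) (hf : f.natDegree ≤ n) :
    fh = 0 ↔ f = 0 := by
  rcases eq_or_ne γ 0 with rfl | hγ
  · obtain ⟨hα, hδ⟩ : α ≠ 0 ∧ δ ≠ 0 := by simpa using hΔ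
    rw [hfh.eq_C_mul_taylor hδ, mul_eq_zero, C_eq_zero, or_iff_right (pow_ne_zero n hδ),
      comp_C_mul_X_eq_zero_iff (mem_nonZeroDivisors_of_ne_zero (div_ne_zero hα hδ)),
      taylor_eq_zero]
  · rw [hfh.eq_taylor_reflect hγ hf, taylor_eq_zero,
      comp_C_mul_X_eq_zero_iff (mem_nonZeroDivisors_of_ne_zero hγ), reflect_eq_zero_iff,
      comp_C_mul_X_eq_zero_iff
        (mem_nonZeroDivisors_of_ne_zero (div_ne_zero (neg_ne_zero.mpr hΔ) hγ)),
      taylor_eq_zero]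

end Mobius

theorem IsMobiusTransform.apolarSum_eq {n : ℕ} {α β γ δ : ℂ} {f g fh gh : ℂ[X]}
    (hfh : IsMobiusTransform n α β γ δ f fh) (hgh : IsMobiusTransform n α β γ δ g gh)
    (hΔ : α * δ - β * γ ≠ 0) (hf : f.natDegree ≤ n) (hg : g.natDegree ≤ n) :
    apolarSum n fh gh = (α * δ - β * γ) ^ n * apolarSum n f g := by
  rcases eq_or_ne γ 0 with rfl | hγ
  · obtain ⟨hα, hδ⟩ : α ≠ 0 ∧ δ ≠ 0 := by simpa using hΔ
    rw [hfh.eq_C_mul_taylor hδ, hgh.eq_C_mul_taylor hδ, apolarSum_C_mul_C_mul,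
      apolarSum_comp_C_mul_X, apolarSum_taylor hf hg, ← mul_assoc, ← pow_mul, mul_zero, sub_zero,
      div_pow, mul_pow]
    field_simp
    ring
  · have hdeg : ∀ p : ℂ[X], p.natDegree ≤ n → ((reflect n ((taylor (α / γ) p).comp
        (C (-(α * δ - β * γ) / γ) * X))).comp (C γ * X)).natDegree ≤ n := fun p hp =>
      (natDegree_comp_C_mul_X_le _ _).trans (natDegree_reflect_le.trans (max_le le_rfl
        ((natDegree_comp_C_mul_X_le _ _).trans ((natDegree_taylor p _).trans_le hp))))
    rw [hfh.eq_taylor_reflect hγ hf, hgh.eq_taylor_reflect hγ hg,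
      apolarSum_taylor (hdeg f hf) (hdeg g hg), apolarSum_comp_C_mul_X, apolarSum_reflect,
      apolarSum_comp_C_mul_X, apolarSum_taylor hf hg, ← mul_assoc, ← mul_assoc, ← mul_pow,
      ← mul_pow]
    congr 2
    field_simp

/-- Apolarity is invariant under Möbius transformations:  if
`φ(t) = (at+b)/(ct+d)` (with `ad - bc ≠ 0`) has inverse
`φ⁻¹(t) = (αt+β)/(γt+δ)`, and `f̂(t) = (γt+δ)^n f(φ⁻¹(t))`,
`ĝ(t) = (γt+δ)^n g(φ⁻¹(t))` have degree `n`, then `f̂` and `ĝ` are apolar iff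
`f` and `g` are. -/
theorem apolar_mobius_invariant (n : ℕ) (f g fh gh : Polynomial ℂ)
    (a b c d α β γ δ : ℂ) (hmob : a * d - b * c ≠ 0)
    (hinv : ∃ lam : ℂ, lam ≠ 0 ∧
      α = lam * d ∧ β = -(lam * b) ∧ γ = -(lam * c) ∧ δ = lam * a)
    (hfn : f.natDegree = n) (hgn : g.natDegree = n)
    (hfhn : fh.natDegree = n) (hghn : gh.natDegree = n)
    (hfh : ∀ t : ℂ, γ * t + δ ≠ 0 →
      fh.eval t = (γ * t + δ) ^ n * f.eval ((α * t + β) / (γ * t + δ)))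
    (hgh : ∀ t : ℂ, γ * t + δ ≠ 0 →
      gh.eval t = (γ * t + δ) ^ n * g.eval ((α * t + β) / (γ * t + δ))) :
    Apolar n fh gh ↔ Apolar n f g := by
  have hΔ : α * δ - β * γ ≠ 0 := by
    obtain ⟨lam, hlam, rfl, rfl, rfl, rfl⟩ := hinv
    convert mul_ne_zero (pow_ne_zero 2 hlam) hmob using 1
    ring
  have hlead : ∀ p : ℂ[X], p.natDegree = n → (p.coeff n ≠ 0 ↔ p ≠ 0) := fun p hp => by
    rw [← hp, coeff_natDegree, leadingCoeff_ne_zero]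
  rw [Apolar, Apolar, mul_ne_zero_iff, mul_ne_zero_iff, hlead fh hfhn, hlead gh hghn,
    hlead f hfn, hlead g hgn, ne_eq, ne_eq, ne_eq, ne_eq,
    IsMobiusTransform.eq_zero_iff hfh hΔ hfn.le, IsMobiusTransform.eq_zero_iff hgh hΔ hgn.le,
    IsMobiusTransform.apolarSum_eq hfh hgh hΔ hfn.le hgn.le, mul_eq_zero,
    or_iff_right (pow_ne_zero n hΔ)]
end

section
/- Grace's Apolarity Theorem: Let f(t) and g(t) be apolar complex polynomials of degree n, and let 𝒜 be a circular region. If every root of g lies in 𝒜, then f has at least one root in 𝒜. -/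
/-!
For a polynomial `f` of degree `m` and points `β₁, …, βₘ`, the polarization `Φ(f; β₁, …, βₘ)` is
the symmetric multi-affine form whose diagonal is `f`. By Vieta, apolarity of `f` and `g` says
exactly that `Φ(f; roots of g) = 0`, and symmetrically `Φ(g; roots of f) = 0`.

Either the circular region or its complement is a convex set `K` whose images under the inversions
`z ↦ (w - z)⁻¹` with `w ∉ K` are again convex (up to the point `0`). So it suffices to show that
`Φ(f; β₁, …, βₘ) ≠ 0` when all roots of `f` lie in `K` and all `βᵢ` lie outside `K`. Peeling off
`β₁` replaces `f` by its polar derivative `m f + (β₁ - z) f'`, up to a nonzero factor. This has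
degree exactly `m - 1`, since the centroid of the roots of `f` lies in `K` and `β₁` does not, and
its roots lie in `K` by Laguerre's argument: at a root `w ∉ K`, the points `(w - a)⁻¹`, `a` running
over the roots of `f`, average to `(w - β₁)⁻¹`, which by convexity lies in the image of `K`,
forcing `β₁ ∈ K`.
-/

open Polynomial

/-- A circular region: an open or closed subset of `ℂ` bounded by a circle or a
straight line, i.e. an open/closed disk, the open/closed exterior of a disk, or
an open/closed half-plane. -/
def CircularRegion (A : Set ℂ) : Prop :=
  (∃ p : ℂ, ∃ r : ℝ, 0 < r ∧ A = {z : ℂ | ‖z - p‖ < r}) ∨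
  (∃ p : ℂ, ∃ r : ℝ, 0 < r ∧ A = {z : ℂ | ‖z - p‖ ≤ r}) ∨
  (∃ p : ℂ, ∃ r : ℝ, 0 < r ∧ A = {z : ℂ | r < ‖z - p‖}) ∨
  (∃ p : ℂ, ∃ r : ℝ, 0 < r ∧ A = {z : ℂ | r ≤ ‖z - p‖}) ∨
  (∃ u v : ℂ, u ≠ 0 ∧ A = {z : ℂ | 0 < (u * z + v).im}) ∨
  (∃ u v : ℂ, u ≠ 0 ∧ A = {z : ℂ | 0 ≤ (u * z + v).im})

open Set

namespace Multiset

variable {R : Type*} [CommSemiring R]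

theorem esymm_cons_succ (a : R) (s : Multiset R) (k : ℕ) :
    (a ::ₘ s).esymm (k + 1) = s.esymm (k + 1) + a * s.esymm k := by
  simp only [esymm, powersetCard_cons, map_add, sum_add, map_map, Function.comp_def, prod_cons,
    sum_map_mul_left]

theorem esymm_eq_zero_of_card_lt {s : Multiset R} {k : ℕ} (h : card s < k) : s.esymm k = 0 := by
  simp [esymm, powersetCard_eq_empty _ h]

end Multiset

section PolarDerivative

variable {R : Type*} [CommRing R]

noncomputable def polarDerivative (n : ℕ) (β : R) (f : R[X]) : R[X] :=
  C (n : R) * f + (C β - X) * derivative f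

theorem coeff_polarDerivative (n : ℕ) (β : R) (f : R[X]) (k : ℕ) :
    (polarDerivative n β f).coeff k = (n - k) * f.coeff k + β * (k + 1) * f.coeff (k + 1) := by
  rw [polarDerivative, coeff_add, coeff_C_mul, sub_mul, coeff_sub, coeff_C_mul, coeff_derivative]
  cases k with
  | zero => simp [mul_coeff_zero]
  | succ k =>
    rw [coeff_X_mul, coeff_derivative]
    push_cast
    ring

end PolarDerivative

section Polarization

open Finset

variable {R : Type*} [Field R]

/-- The blossom of `f`, regarded as a polynomial of degree `card s`, at the points of `s`: the
symmetric form, affine in each point, whose value at `{z, …, z}` is `f.eval z`. -/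
noncomputable def polarization (f : R[X]) (s : Multiset R) : R :=
  ∑ k ∈ range (Multiset.card s + 1), f.coeff k * s.esymm k / ((Multiset.card s).choose k : R)

theorem polarization_cons (f : R[X]) (β : R) (s : Multiset R) :
    polarization f (β ::ₘ s) = ∑ k ∈ range (Multiset.card s + 1),
      (f.coeff k / ((Multiset.card s + 1).choose k : R)
        + β * f.coeff (k + 1) / ((Multiset.card s + 1).choose (k + 1) : R)) * s.esymm k := by
  set m := Multiset.card s
  have hsplit : polarization f (β ::ₘ s)
      = ∑ k ∈ range (m + 2), f.coeff k * s.esymm k / ((m + 1).choose k : R)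
        + ∑ k ∈ range (m + 1), β * f.coeff (k + 1) * s.esymm k / ((m + 1).choose (k + 1) : R) := by
    rw [polarization, Multiset.card_cons, sum_range_succ', sum_range_succ' _ (m + 1)]
    simp only [Multiset.esymm_cons_succ]
    rw [add_right_comm, ← sum_add_distrib]
    congr 1
    · refine sum_congr rfl fun k _ => by ring
    · simp [Multiset.esymm]
  have htop : ∑ k ∈ range (m + 2), f.coeff k * s.esymm k / ((m + 1).choose k : R)
      = ∑ k ∈ range (m + 1), f.coeff k * s.esymm k / ((m + 1).choose k : R) := by
    rw [sum_range_succ, Multiset.esymm_eq_zero_of_card_lt (Nat.lt_succ_self m)]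
    simp
  rw [hsplit, htop, ← sum_add_distrib]
  exact sum_congr rfl fun k _ => by ring

theorem polarization_polarDerivative [CharZero R] (f : R[X]) (β : R) (s : Multiset R) :
    polarization (polarDerivative (Multiset.card s + 1) β f) s
      = (Multiset.card s + 1) * polarization f (β ::ₘ s) := by
  rw [polarization_cons, polarization, mul_sum]
  set m := Multiset.card s
  refine sum_congr rfl fun k hk => ?_
  have hk : k ≤ m := Nat.lt_succ_iff.mp (mem_range.mp hk)
  have hc : (m.choose k : R) ≠ 0 := Nat.cast_ne_zero.mpr (Nat.choose_pos hk).ne'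
  have hc₁ : ((m + 1).choose k : R) ≠ 0 := Nat.cast_ne_zero.mpr (Nat.choose_pos (by omega)).ne'
  have hc₂ : ((m + 1).choose (k + 1) : R) ≠ 0 :=
    Nat.cast_ne_zero.mpr (Nat.choose_pos (by omega)).ne'
  have hA : ((m + 1 : ℕ) - k : R) * ((m + 1).choose k : R) = (m + 1) * (m.choose k : R) := by
    rw [← Nat.cast_sub (by omega)]
    exact_mod_cast (mul_comm _ _).trans (Nat.choose_mul_succ_eq m k).symm |>.trans (mul_comm _ _)
  have hB : ((k : R) + 1) * ((m + 1).choose (k + 1) : R) = (m + 1) * (m.choose k : R) := by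
    exact_mod_cast (mul_comm _ _).trans (Nat.add_one_mul_choose_eq m k).symm
  rw [coeff_polarDerivative]
  push_cast at hA ⊢
  field_simp
  linear_combination (s.esymm k * f.coeff k * ((m + 1).choose (k + 1) : R)) * hA
    + (β * f.coeff (k + 1) * s.esymm k * ((m + 1).choose k : R)) * hB

end Polarization

theorem apolarSum_eq_polarization_roots {n : ℕ} (f : ℂ[X]) {g : ℂ[X]} (hg : g.natDegree = n) :
    apolarSum n f g = (-1) ^ n * g.coeff n * polarization f g.roots := by
  have hcard : Multiset.card g.roots = n := IsAlgClosed.card_roots_eq_natDegree.trans hg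
  rw [apolarSum, polarization, hcard, Finset.mul_sum]
  refine Finset.sum_congr rfl fun k hk => ?_
  have hk : k ≤ n := Nat.lt_succ_iff.mp (Finset.mem_range.mp hk)
  have hvieta : g.coeff (n - k) = g.coeff n * (-1) ^ k * g.roots.esymm k := by
    have h := coeff_eq_esymm_roots_of_card (hcard.trans hg.symm) (k := n - k) (by omega)
    rwa [hg, Nat.sub_sub_self hk, leadingCoeff, hg] at h
  have hsign : (-1 : ℂ) ^ (n - k) * (-1) ^ k = (-1) ^ n := by rw [← pow_add, Nat.sub_add_cancel hk]
  rw [hvieta]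
  linear_combination (f.coeff k * g.coeff n * g.roots.esymm k / (n.choose k : ℂ)) * hsign

theorem apolarSum_comm (n : ℕ) (f g : ℂ[X]) : apolarSum n g f = (-1) ^ n * apolarSum n f g := by
  rw [apolarSum, apolarSum, Finset.mul_sum, ← Finset.sum_range_reflect]
  refine Finset.sum_congr rfl fun k hk => ?_
  have hk : k ≤ n := Nat.lt_succ_iff.mp (Finset.mem_range.mp hk)
  rw [Nat.add_sub_cancel, Nat.sub_sub_self hk, Nat.choose_symm hk]
  have hsign : (-1 : ℂ) ^ k = (-1) ^ n * (-1) ^ (n - k) := by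
    rw [← pow_add, show n + (n - k) = 2 * (n - k) + k by omega, pow_add, pow_mul, neg_one_sq,
      one_pow, one_mul]
  rw [hsign]
  ring

/-- For `α ≥ 0` the sets `{circleForm α γ δ < 0}` and `{circleForm α γ δ ≤ 0}` are the open and
closed disks (`α > 0`) and half-planes (`α = 0`). -/
noncomputable def circleForm (α : ℝ) (γ : ℂ) (δ : ℝ) (z : ℂ) : ℝ :=
  α * Complex.normSq z + (γ * z).re + δ

theorem convexOn_circleForm {α : ℝ} (hα : 0 ≤ α) (γ : ℂ) (δ : ℝ) :
    ConvexOn ℝ univ (circleForm α γ δ) := by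
  have hsq : ConvexOn ℝ univ Complex.normSq := by
    simpa [Pi.pow_def, Complex.sq_norm] using
      convexOn_univ_norm.pow (fun z _ => norm_nonneg (z : ℂ)) 2
  have hlin : ConvexOn ℝ univ fun z : ℂ => (γ * z).re :=
    (Complex.reLm.comp (LinearMap.mulLeft ℝ γ)).convexOn convex_univ
  exact ((hsq.smul hα).add hlin).add_const δ

/-- An inversion centred at `w` turns a circle form into a circle form whose leading coefficient
is the value of the original one at `w`. -/
theorem circleForm_inv_mul (α : ℝ) (γ : ℂ) (δ : ℝ) (w : ℂ) {y : ℂ} (hy : y ≠ 0) :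
    circleForm (circleForm α γ δ w) (-2 * α * w - starRingEnd ℂ γ) α y
      = circleForm α γ δ (w - y⁻¹) * Complex.normSq y := by
  have hN : y.re ^ 2 + y.im ^ 2 ≠ 0 := by
    simpa [Complex.normSq_apply, sq] using (Complex.normSq_pos.mpr hy).ne'
  simp only [circleForm, Complex.normSq_apply, Complex.sub_re, Complex.sub_im, Complex.mul_re,
    Complex.mul_im, Complex.inv_re, Complex.inv_im, Complex.ofReal_re, Complex.ofReal_im,
    Complex.conj_re, Complex.conj_im, Complex.neg_re, Complex.neg_im, Complex.re_ofNat,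
    Complex.im_ofNat, ← sq]
  field_simp
  ring

structure InversionConvex (K : Set ℂ) : Prop where
  convex : Convex ℝ K
  inversion : ∀ w ∉ K, ∃ L : Set ℂ, Convex ℝ L ∧ MapsTo (fun a => (w - a)⁻¹) K L ∧
    ∀ y ∈ L, y ≠ 0 → w - y⁻¹ ∈ K

theorem convex_circleForm_preimage {S : Set ℝ} (hS : Convex ℝ S) (hS_lower : IsLowerSet S)
    {α : ℝ} (hα : 0 ≤ α) (γ : ℂ) (δ : ℝ) : Convex ℝ (circleForm α γ δ ⁻¹' S) :=
  fun _ hx _ hy _ _ ha hb hab =>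
    hS_lower ((convexOn_circleForm hα γ δ).2 trivial trivial ha hb hab) (hS hx hy ha hb hab)

theorem inversionConvex_circleForm_preimage {S : Set ℝ} (hS : Convex ℝ S)
    (hS_lower : IsLowerSet S) (hS_smul : ∀ c : ℝ, 0 < c → ∀ x, x * c ∈ S ↔ x ∈ S)
    (hS_compl : Sᶜ ⊆ Ici 0) {α : ℝ} (hα : 0 ≤ α) (γ : ℂ) (δ : ℝ) :
    InversionConvex (circleForm α γ δ ⁻¹' S) := by
  refine ⟨convex_circleForm_preimage hS hS_lower hα γ δ, fun w hw => ?_⟩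
  refine ⟨circleForm (circleForm α γ δ w) (-2 * α * w - starRingEnd ℂ γ) α ⁻¹' S,
    convex_circleForm_preimage hS hS_lower (hS_compl hw) _ _, fun a ha => ?_, fun y hy hy0 => ?_⟩
  · have hwa : (w - a)⁻¹ ≠ 0 := inv_ne_zero (sub_ne_zero.mpr fun h => hw (h ▸ ha))
    rwa [mem_preimage, circleForm_inv_mul _ _ _ _ hwa, inv_inv, sub_sub_cancel,
      hS_smul _ (Complex.normSq_pos.mpr hwa)]
  · rwa [mem_preimage, circleForm_inv_mul _ _ _ _ hy0,
      hS_smul _ (Complex.normSq_pos.mpr hy0)] at hy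

theorem inversionConvex_circleForm_lt {α : ℝ} (hα : 0 ≤ α) (γ : ℂ) (δ : ℝ) :
    InversionConvex {z | circleForm α γ δ z < 0} :=
  inversionConvex_circleForm_preimage (convex_Iio 0) (isLowerSet_Iio 0)
    (fun _ hc x => by simpa using mul_lt_mul_iff_left₀ (b := x) (c := 0) hc) compl_Iio.le hα γ δ

theorem inversionConvex_circleForm_le {α : ℝ} (hα : 0 ≤ α) (γ : ℂ) (δ : ℝ) :
    InversionConvex {z | circleForm α γ δ z ≤ 0} :=
  inversionConvex_circleForm_preimage (convex_Iic 0) (isLowerSet_Iic 0)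
    (fun _ hc x => by simpa using mul_le_mul_iff_left₀ (b := x) (c := 0) hc)
    (compl_Iic.trans_le Ioi_subset_Ici_self) hα γ δ

theorem circleForm_one_eq_norm_sub_sq (p : ℂ) (r : ℝ) (z : ℂ) :
    circleForm 1 (-2 * starRingEnd ℂ p) (Complex.normSq p - r ^ 2) z = ‖z - p‖ ^ 2 - r ^ 2 := by
  simp only [circleForm, Complex.sq_norm, Complex.normSq_sub]
  simp [Complex.mul_re]
  ring

theorem circleForm_zero_eq_neg_im (u v z : ℂ) :
    circleForm 0 (Complex.I * u) (-v.im) z = -(u * z + v).im := by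
  simp [circleForm, Complex.mul_re, Complex.mul_im]
  ring

theorem inversionConvex_norm_sub_lt (p : ℂ) {r : ℝ} (hr : 0 ≤ r) :
    InversionConvex {z | ‖z - p‖ < r} := by
  convert inversionConvex_circleForm_lt zero_le_one (-2 * starRingEnd ℂ p)
    (Complex.normSq p - r ^ 2) using 3 with z
  rw [circleForm_one_eq_norm_sub_sq, sub_neg, sq_lt_sq₀ (norm_nonneg _) hr]

theorem inversionConvex_norm_sub_le (p : ℂ) {r : ℝ} (hr : 0 ≤ r) :
    InversionConvex {z | ‖z - p‖ ≤ r} := by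
  convert inversionConvex_circleForm_le zero_le_one (-2 * starRingEnd ℂ p)
    (Complex.normSq p - r ^ 2) using 3 with z
  rw [circleForm_one_eq_norm_sub_sq, sub_nonpos, sq_le_sq₀ (norm_nonneg _) hr]

theorem inversionConvex_im_pos (u v : ℂ) : InversionConvex {z | 0 < (u * z + v).im} := by
  simpa only [circleForm_zero_eq_neg_im, neg_neg_iff_pos] using
    inversionConvex_circleForm_lt le_rfl (Complex.I * u) (-v.im)

theorem inversionConvex_im_nonneg (u v : ℂ) : InversionConvex {z | 0 ≤ (u * z + v).im} := by
  simpa only [circleForm_zero_eq_neg_im, neg_nonpos] using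
    inversionConvex_circleForm_le le_rfl (Complex.I * u) (-v.im)

theorem CircularRegion.inversionConvex_or_compl {A : Set ℂ} (hA : CircularRegion A) :
    InversionConvex A ∨ InversionConvex Aᶜ := by
  rcases hA with ⟨p, r, hr, rfl⟩ | ⟨p, r, hr, rfl⟩ | ⟨p, r, hr, rfl⟩ | ⟨p, r, hr, rfl⟩ |
    ⟨u, v, -, rfl⟩ | ⟨u, v, -, rfl⟩
  · exact .inl (inversionConvex_norm_sub_lt p hr.le)
  · exact .inl (inversionConvex_norm_sub_le p hr.le)
  · exact .inr (by simpa [compl_ofPred] using inversionConvex_norm_sub_le p hr.le)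
  · exact .inr (by simpa [compl_ofPred] using inversionConvex_norm_sub_lt p hr.le)
  · exact .inl (inversionConvex_im_pos u v)
  · exact .inl (inversionConvex_im_nonneg u v)

theorem Convex.multiset_sum_div_card_mem {K : Set ℂ} (hK : Convex ℝ K) {s : Multiset ℂ}
    (hs : s ≠ 0) (h : ∀ z ∈ s, z ∈ K) : s.sum / Multiset.card s ∈ K := by
  classical
  have hn : (0 : ℝ) < Multiset.card s := by exact_mod_cast Multiset.card_pos.mpr hs
  convert hK.sum_mem (t := Finset.univ) (w := fun _ : s => (Multiset.card s : ℝ)⁻¹)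
    (z := fun x : s => (x : ℂ)) (fun _ _ => by positivity) (by simp [hn.ne'])
    (fun x _ => h x Multiset.coe_mem) using 1
  simp only [Complex.real_smul, Complex.ofReal_inv, Complex.ofReal_natCast, ← Finset.mul_sum,
    ← Multiset.sum_eq_sum_coe, div_eq_inv_mul]

theorem degree_polarDerivative {K : Set ℂ} (hK : Convex ℝ K) {f : ℂ[X]} {m : ℕ}
    (hf : f.degree = ↑(m + 1)) (hroots : ∀ z, f.IsRoot z → z ∈ K) {β : ℂ} (hβ : β ∉ K) :
    (polarDerivative (m + 1) β f).degree = m := by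
  have hnat : f.natDegree = m + 1 := natDegree_eq_of_degree_eq_some hf
  have hf0 : f ≠ 0 := fun h => by simp [h] at hnat
  have hcard : Multiset.card f.roots = m + 1 := IsAlgClosed.card_roots_eq_natDegree.trans hnat
  have hcentroid : f.roots.sum / (m + 1 : ℂ) ∈ K := by
    have hne : f.roots ≠ 0 := fun h => by simp [h] at hcard
    simpa [hcard] using hK.multiset_sum_div_card_mem hne fun z hz => hroots z (mem_roots'.mp hz).2
  have hnext : f.coeff m = -f.leadingCoeff * f.roots.sum := by
    rw [← (IsAlgClosed.splits f).nextCoeff_eq_neg_sum_roots_mul_leadingCoeff,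
      nextCoeff_of_natDegree_pos (by omega), hnat, Nat.add_sub_cancel]
  have hlead : f.coeff (m + 1) = f.leadingCoeff := by rw [← hnat]; rfl
  refine degree_eq_of_le_of_coeff_ne_zero ?_ ?_
  · refine (degree_le_iff_coeff_zero _ _).mpr fun N hN => ?_
    have hN : m < N := by exact_mod_cast hN
    have hN1 : f.coeff (N + 1) = 0 := coeff_eq_zero_of_natDegree_lt (by omega)
    rw [coeff_polarDerivative, hN1, mul_zero, add_zero]
    rcases (Nat.succ_le_of_lt hN).eq_or_lt with rfl | hlt
    · simp
    · rw [coeff_eq_zero_of_natDegree_lt (by omega), mul_zero]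
  · rw [coeff_polarDerivative, hnext, hlead]
    intro h
    apply hβ
    convert hcentroid using 1
    have hlc : f.leadingCoeff ≠ 0 := leadingCoeff_ne_zero.mpr hf0
    field_simp
    push_cast at h
    apply mul_left_cancel₀ hlc
    linear_combination h

theorem mem_of_isRoot_polarDerivative {K : Set ℂ} (hK : InversionConvex K) {f : ℂ[X]} {n : ℕ}
    (hn : n ≠ 0) (hf : f.degree = n) (hroots : ∀ z, f.IsRoot z → z ∈ K) {β : ℂ} (hβ : β ∉ K)
    {w : ℂ} (hw : (polarDerivative n β f).IsRoot w) : w ∈ K := by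
  by_contra hwK
  obtain ⟨L, hL, hKL, hLK⟩ := hK.inversion w hwK
  have hfw : f.eval w ≠ 0 := fun h => hwK (hroots w h)
  have hcard : Multiset.card f.roots = n :=
    IsAlgClosed.card_roots_eq_natDegree.trans (natDegree_eq_of_degree_eq_some hf)
  set T := (f.roots.map fun a => (w - a)⁻¹).sum
  have hT : (w - β) * T = n := by
    have hder := (IsAlgClosed.splits f).eval_derivative_eq_eval_mul_sum hfw
    simp only [one_div] at hder
    simp only [IsRoot, polarDerivative, eval_add, eval_mul, eval_C, eval_sub, eval_X, hder] at hw
    apply mul_left_cancel₀ hfw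
    linear_combination -hw
  have hwβ : w - β ≠ 0 := fun h => hn (by simpa [h] using hT.symm)
  have hmean : (w - β)⁻¹ ∈ L := by
    have hne : f.roots.map (fun a => (w - a)⁻¹) ≠ 0 := by
      simp [← Multiset.card_eq_zero (s := f.roots), hcard, hn]
    have hT0 : T ≠ 0 := right_ne_zero_of_mul (hT ▸ Nat.cast_ne_zero.mpr hn)
    convert hL.multiset_sum_div_card_mem hne fun y hy => ?_ using 1
    · rw [Multiset.card_map, hcard, ← hT, mul_comm, ← div_div, div_self hT0, one_div]
    · obtain ⟨a, ha, rfl⟩ := Multiset.mem_map.mp hy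
      exact hKL (hroots a (mem_roots'.mp ha).2)
  exact hβ (by simpa using hLK _ hmean (inv_ne_zero hwβ))

theorem polarization_ne_zero {K : Set ℂ} (hK : InversionConvex K) (s : Multiset ℂ) {f : ℂ[X]}
    (hf : f.degree = Multiset.card s) (hroots : ∀ z, f.IsRoot z → z ∈ K)
    (hs : ∀ b ∈ s, b ∉ K) : polarization f s ≠ 0 := by
  induction s using Multiset.induction_on generalizing f with
  | empty => simpa [polarization, Multiset.esymm] using coeff_ne_zero_of_eq_degree hf
  | cons β s ih =>
    have hβ : β ∉ K := hs β (Multiset.mem_cons_self β s)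
    rw [Multiset.card_cons] at hf
    have hg := ih (degree_polarDerivative hK.convex hf hroots hβ)
      (fun w => mem_of_isRoot_polarDerivative hK (Nat.succ_ne_zero _) hf hroots hβ)
      (fun b hb => hs b (Multiset.mem_cons_of_mem hb))
    rw [polarization_polarDerivative] at hg
    exact right_ne_zero_of_mul hg

/-- Grace's Apolarity Theorem: if `f` and `g` are apolar polynomials of degree
`n` and every root of `g` lies in a circular region `A`, then `f` has at least
one root in `A`. -/
theorem grace_apolarity (n : ℕ) (f g : Polynomial ℂ)
    (hfn : f.natDegree = n) (hgn : g.natDegree = n)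
    (hap : Apolar n f g)
    (A : Set ℂ) (hA : CircularRegion A)
    (hg : ∀ z : ℂ, g.eval z = 0 → z ∈ A) :
    ∃ z : ℂ, f.eval z = 0 ∧ z ∈ A := by
  obtain ⟨hlead, hsum⟩ := hap
  have hf0 : f.coeff n ≠ 0 := left_ne_zero_of_mul hlead
  have hg0 : g.coeff n ≠ 0 := right_ne_zero_of_mul hlead
  have hfg : polarization f g.roots = 0 := by
    simpa [apolarSum_eq_polarization_roots f hgn, hg0] using hsum
  have hgf : polarization g f.roots = 0 := by
    have h := apolarSum_comm n f g
    simpa [apolarSum_eq_polarization_roots g hfn, hf0, hsum] using h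
  have hfdeg : f.degree = Multiset.card g.roots :=
    (degree_eq_iff_natDegree_eq (by rintro rfl; simp at hf0)).mpr
      (by rw [IsAlgClosed.card_roots_eq_natDegree, hfn, hgn])
  have hgdeg : g.degree = Multiset.card f.roots :=
    (degree_eq_iff_natDegree_eq (by rintro rfl; simp at hg0)).mpr
      (by rw [IsAlgClosed.card_roots_eq_natDegree, hfn, hgn])
  by_contra! hfA
  rcases hA.inversionConvex_or_compl with hK | hK
  · exact polarization_ne_zero hK f.roots hgdeg hg (fun b hb => hfA b (mem_roots'.mp hb).2) hgf
  · exact polarization_ne_zero hK g.roots hfdeg hfA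
      (fun b hb hbA => hbA (hg b (mem_roots'.mp hb).2)) hfg
end
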